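/- arXiv:2001.08347 — 6 statements merged into one kernel-verified Lean document; each statement's English description precedes it below -/
import Mathlib

section
/- Let p be a prime with p ≡ 3 (mod 4) and let r be a positive integer. Then the product ∏_{k=1}^{(p^{2r}-1)/2} (4k-1)/(4k+1) is a rational number whose numerator and denominator are coprime to p, and it is congruent to 1 modulo p², i.e., its numerator is congruent to its denominator modulo p². -/
open Finset Filter

/-- Morita's `p`-adic Gamma function at natural numbers:
`Γ_p(n) = (-1)^n ∏_{1 ≤ k < n, p ∤ k} k`. -/
noncomputable def pGammaNat (p : ℕ) [Fact p.Prime] (n : ℕ) : ℤ_[p] :=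
  (-1) ^ n * ∏ k ∈ (Finset.range n).filter (fun k => ¬ p ∣ k), (k : ℤ_[p])

/-- Morita's `p`-adic Gamma function on `ℤ_p`, the continuous extension of `pGammaNat`. -/
noncomputable def pGamma (p : ℕ) [Fact p.Prime] (x : ℤ_[p]) : ℤ_[p] :=
  limUnder (Filter.comap (Nat.cast : ℕ → ℤ_[p]) (nhds x)) (pGammaNat p)

/-- Extension of `pGamma` to `ℚ_p` (by `0` outside `ℤ_p`), used to take derivatives. -/
noncomputable def pGammaQ (p : ℕ) [Fact p.Prime] (x : ℚ_[p]) : ℚ_[p] :=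
  if h : ‖x‖ ≤ 1 then (pGamma p ⟨x, h⟩ : ℚ_[p]) else 0

namespace GuoAux

def ball (p j c : ℕ) : Finset ℕ := (Finset.range (2 * p ^ j)).filter (fun m => m % 4 = c)
def cop (p j c : ℕ) : Finset ℕ := (ball p j c).filter (fun m => ¬ p ∣ m)
def gg (p j c : ℕ) : ℕ := ∏ m ∈ ball p j c, m
def pp (p j c : ℕ) : ℕ := ∏ m ∈ cop p j c, m

lemma mem_ball {p j c m : ℕ} : m ∈ ball p j c ↔ m < 2 * p ^ j ∧ m % 4 = c := by
  simp [ball, Finset.mem_filter, Finset.mem_range, and_comm]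

lemma mem_cop {p j c m : ℕ} : m ∈ cop p j c ↔ (m < 2 * p ^ j ∧ m % 4 = c) ∧ ¬ p ∣ m := by
  simp [cop, ball, Finset.mem_filter, Finset.mem_range, and_comm, and_assoc]

lemma pow_odd {p : ℕ} (hodd : p % 2 = 1) (j : ℕ) : p ^ j % 2 = 1 := by
  induction j with
  | zero => rfl
  | succ j ih => rw [pow_succ, Nat.mul_mod, ih, hodd]

lemma count_range_mod4 (c : ℕ) (hc : c < 4) (n : ℕ) :
    ((Finset.range n).filter (fun m => m % 4 = c)).card = (n + 3 - c) / 4 := by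
  induction n with
  | zero => simp; omega
  | succ n ih =>
    rw [Finset.range_add_one, Finset.filter_insert]
    by_cases h : n % 4 = c
    · rw [if_pos h, Finset.card_insert_of_notMem (by simp)]
      omega
    · rw [if_neg h]
      omega

lemma card_ball3 {p : ℕ} (hodd : p % 2 = 1) (j : ℕ) : (ball p j 3).card * 2 + 1 = p ^ j := by
  have h := pow_odd hodd j
  rw [ball, count_range_mod4 3 (by norm_num)]
  omega

lemma card_ball1 {p : ℕ} (hodd : p % 2 = 1) (j : ℕ) : (ball p j 1).card * 2 = p ^ j + 1 := by
  have h := pow_odd hodd j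
  rw [ball, count_range_mod4 1 (by norm_num)]
  omega



lemma image_dvd_ball {p j c c' : ℕ} (h4 : p % 4 = 3)
    (hcc : (c = 1 ∧ c' = 3) ∨ (c = 3 ∧ c' = 1)) :
    (ball p (j+1) c).filter (fun m => p ∣ m) = (ball p j c').image (fun t => p * t) := by
  have hp0 : 0 < p := by omega
  have hkey : ∀ t : ℕ, (p * t < 2 * p ^ (j+1) ↔ t < 2 * p ^ j) := by
    intro t
    rw [pow_succ, show 2 * (p ^ j * p) = p * (2 * p ^ j) by ring]
    exact Nat.mul_lt_mul_left hp0
  ext m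
  simp only [Finset.mem_filter, Finset.mem_image, mem_ball]
  constructor
  · rintro ⟨⟨hlt, hm4⟩, t, rfl⟩
    have hmod := Nat.mul_mod p t 4
    rw [h4] at hmod
    have ht4 : t % 4 < 4 := Nat.mod_lt _ (by norm_num)
    exact ⟨t, ⟨(hkey t).mp hlt, by omega⟩, rfl⟩
  · rintro ⟨t, ⟨hlt, ht4⟩, rfl⟩
    have hmod := Nat.mul_mod p t 4
    rw [h4, ht4] at hmod
    exact ⟨⟨(hkey t).mpr hlt, by omega⟩, ⟨t, rfl⟩⟩


lemma split {p j c c' : ℕ} (h4 : p % 4 = 3)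
    (hcc : (c = 1 ∧ c' = 3) ∨ (c = 3 ∧ c' = 1)) :
    gg p (j+1) c = pp p (j+1) c * (p ^ (ball p j c').card * gg p j c') := by
  have hp0 : 0 < p := by omega
  have h1 := Finset.prod_filter_mul_prod_filter_not (ball p (j+1) c) (fun m => p ∣ m)
    (fun m => m)
  rw [gg, ← h1, image_dvd_ball h4 hcc,
    Finset.prod_image (fun a _ b _ h => Nat.eq_of_mul_eq_mul_left hp0 h),
    Finset.prod_mul_distrib, Finset.prod_const]
  rw [pp, cop, gg]
  ring

lemma card_split {p j c c' : ℕ} (h4 : p % 4 = 3)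
    (hcc : (c = 1 ∧ c' = 3) ∨ (c = 3 ∧ c' = 1)) :
    (ball p (j+1) c).card = (cop p (j+1) c).card + (ball p j c').card := by
  have h1 := Finset.card_filter_add_card_filter_not (s := ball p (j+1) c)
    (p := fun m => p ∣ m)
  rw [image_dvd_ball h4 hcc, Finset.card_image_of_injective _
    (fun a b h => Nat.eq_of_mul_eq_mul_left (by omega) h)] at h1
  rw [cop]
  omega

lemma cop_subset {p i c : ℕ} (hp : 1 ≤ p) : cop p (i+1) c ⊆ cop p (i+2) c := by
  intro m hm
  rw [mem_cop] at hm ⊢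
  have : p ^ (i+1) ≤ p ^ (i+2) := Nat.pow_le_pow_right hp (by omega)
  exact ⟨⟨by omega, hm.1.2⟩, hm.2⟩

lemma card_sdiff_even {p i : ℕ} (h4 : p % 4 = 3) :
    Even ((cop p (i+2) 1 \ cop p (i+1) 1).card) := by
  have hodd : p % 2 = 1 := by omega
  obtain ⟨q, hq⟩ : ∃ q, p = 2*q+1 := ⟨p/2, by omega⟩
  have hsd : (cop p (i+2) 1 \ cop p (i+1) 1).card
      = (cop p (i+2) 1).card - (cop p (i+1) 1).card :=
    Finset.card_sdiff_of_subset (cop_subset (by omega))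
  have h1 : (ball p (i+2) 1).card = (cop p (i+2) 1).card + (ball p (i+1) 3).card :=
    card_split (p := p) (j := i+1) h4 (Or.inl ⟨rfl, rfl⟩)
  have h2 : (ball p (i+1) 1).card = (cop p (i+1) 1).card + (ball p i 3).card :=
    card_split (p := p) (j := i) h4 (Or.inl ⟨rfl, rfl⟩)
  have hb1 := card_ball1 hodd (p := p) (i+2)
  have hb2 := card_ball1 hodd (p := p) (i+1)
  have hb3 := card_ball3 hodd (p := p) (i+1)
  have hb4 := card_ball3 hodd (p := p) i
  have hA : p^(i+2) = 4*(q*q*p^i) + 4*(q*p^i) + p^i := by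
    rw [show p^(i+2) = p^i * (p * p) by ring, hq]; ring
  have hB : p^(i+1) = 2*(q*p^i) + p^i := by
    rw [show p^(i+1) = p^i * p by ring, hq]; ring
  have hgoal : (cop p (i+2) 1 \ cop p (i+1) 1).card = 2 * (q*(q*p^i)) := by
    rw [hsd]
    have e1 : q*q*p^i = q*(q*p^i) := by ring
    rw [e1] at hA
    omega
  exact ⟨q*(q*p^i), by omega⟩

lemma prod_one_add {R : Type*} [CommRing R] {π : R} (hπ : π * π = 0) (s : Finset ℕ)
    (f : ℕ → R) : ∏ m ∈ s, (1 + π * f m) = 1 + π * ∑ m ∈ s, f m := by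
  induction s using Finset.cons_induction with
  | empty => simp
  | cons a s ha ih =>
    rw [Finset.prod_cons, Finset.sum_cons, ih]
    ring_nf
    linear_combination (f a * ∑ m ∈ s, f m) * hπ

lemma sigma_mem {p j c : ℕ} (hp : p.Prime) (h4 : p % 4 = 3) (hc : c = 1 ∨ c = 3) {m : ℕ}
    (hm : m ∈ cop p (j+1) c) : 2 * p ^ (j+1) - m ∈ cop p (j+1) c := by
  rw [mem_cop] at hm ⊢
  obtain ⟨⟨hlt, hm4⟩, hnd⟩ := hm
  have h2 : (2 * p ^ (j+1)) % 4 = 2 := by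
    have := pow_odd (by omega) (p := p) (j+1); omega
  have hdvd : p ∣ 2 * p ^ (j+1) := Dvd.dvd.mul_left (dvd_pow_self p (Nat.succ_ne_zero j)) 2
  refine ⟨⟨by omega, by omega⟩, fun hcon => hnd ?_⟩
  have := Nat.dvd_sub hdvd hcon
  rw [Nat.sub_sub_self (by omega)] at this
  exact this

lemma sum_inv_zero {p j c : ℕ} (hp : p.Prime) (h4 : p % 4 = 3) (hc : c = 1 ∨ c = 3) :
    ∑ m ∈ cop p (j+1) c, ((m : ZMod p))⁻¹ = 0 := by
  haveI : Fact p.Prime := ⟨hp⟩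
  have cast_sigma : ∀ m ∈ cop p (j+1) c, ((2 * p ^ (j+1) - m : ℕ) : ZMod p) = -(m : ZMod p) := by
    intro m hm
    rw [mem_cop] at hm
    rw [Nat.cast_sub (by omega)]
    push_cast
    simp [ZMod.natCast_self]
  have key : ∑ m ∈ cop p (j+1) c, ((m : ZMod p))⁻¹
      = ∑ m ∈ cop p (j+1) c, -((m : ZMod p))⁻¹ := by
    refine Finset.sum_nbij' (i := fun m => 2 * p ^ (j+1) - m) (j := fun m => 2 * p ^ (j+1) - m)
      (fun m hm => sigma_mem hp h4 hc hm) (fun m hm => sigma_mem hp h4 hc hm)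
      (fun m hm => ?_) (fun m hm => ?_) (fun m hm => ?_)
    · rw [mem_cop] at hm; omega
    · rw [mem_cop] at hm; omega
    · rw [cast_sigma m hm, inv_neg, neg_neg]
  have h2 : (2 : ZMod p) * ∑ m ∈ cop p (j+1) c, ((m : ZMod p))⁻¹ = 0 := by
    rw [Finset.sum_neg_distrib] at key
    linear_combination key
  have h2ne : (2 : ZMod p) ≠ 0 := by
    have : ((2:ℕ) : ZMod p) ≠ 0 := by
      rw [Ne, ZMod.natCast_eq_zero_iff]
      intro hd
      have := Nat.le_of_dvd (by norm_num) hd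
      omega
    simpa using this
  exact (mul_eq_zero.mp h2).resolve_left h2ne

lemma unit_of_cop {p j c m : ℕ} (hp : p.Prime) (hm : m ∈ cop p j c) :
    (m : ZMod (p^2)) * ((m : ZMod (p^2)))⁻¹ = 1 := by
  apply ZMod.mul_inv_of_unit
  rw [ZMod.isUnit_iff_coprime]
  have : Nat.Coprime p m := (Nat.Prime.coprime_iff_not_dvd hp).mpr (mem_cop.mp hm).2
  exact Nat.Coprime.pow_right _ this.symm

lemma inv_cast {p j c m : ℕ} (hp : p.Prime) (hm : m ∈ cop p (j+1) c) :
    (ZMod.castHom (dvd_pow_self p two_ne_zero) (ZMod p)) ((m : ZMod (p^2)))⁻¹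
      = ((m : ZMod p))⁻¹ := by
  haveI : Fact p.Prime := ⟨hp⟩
  have h1 := unit_of_cop hp hm
  have h2 := congrArg (ZMod.castHom (dvd_pow_self p two_ne_zero) (ZMod p)) h1
  rw [map_mul, map_one, map_natCast] at h2
  exact (inv_eq_of_mul_eq_one_right h2).symm

lemma psum_zero {p j c : ℕ} (hp : p.Prime) (h4 : p % 4 = 3) (hc : c = 1 ∨ c = 3) :
    (p : ZMod (p^2)) * ∑ m ∈ cop p (j+1) c, ((m : ZMod (p^2)))⁻¹ = 0 := by
  haveI : Fact p.Prime := ⟨hp⟩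
  haveI : NeZero (p^2) := ⟨pow_ne_zero _ hp.ne_zero⟩
  suffices h : ∀ x : ZMod (p^2), (ZMod.castHom (dvd_pow_self p two_ne_zero) (ZMod p)) x = 0 →
      (p : ZMod (p^2)) * x = 0 by
    apply h
    rw [map_sum]
    rw [Finset.sum_congr rfl (fun m hm => inv_cast hp hm)]
    exact sum_inv_zero hp h4 hc
  intro x hcast
  obtain ⟨n, rfl⟩ := ZMod.natCast_zmod_surjective (n := p^2) x
  rw [map_natCast] at hcast
  rw [ZMod.natCast_eq_zero_iff] at hcast
  obtain ⟨k, rfl⟩ := hcast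
  push_cast
  rw [show ((p : ZMod (p^2)) * ((p:ZMod (p^2)) * k)) = ((p:ZMod (p^2))^2) * k by ring]
  norm_cast
  rw [Nat.cast_mul, ZMod.natCast_self, zero_mul]

lemma mem_sdiff_char {p i c m : ℕ} (h4 : p % 4 = 3) :
    m ∈ cop p (i+2) c \ cop p (i+1) c ↔
      2 * p ^ (i+1) ≤ m ∧ m < 2 * p ^ (i+2) ∧ m % 4 = c ∧ ¬ p ∣ m := by
  have hmono : p ^ (i+1) ≤ p ^ (i+2) := Nat.pow_le_pow_right (by omega) (by omega)
  rw [Finset.mem_sdiff, mem_cop, mem_cop]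
  constructor
  · rintro ⟨⟨⟨h1, h2⟩, h3⟩, h5⟩
    refine ⟨?_, h1, h2, h3⟩
    by_contra hcon
    exact h5 ⟨⟨by omega, h2⟩, h3⟩
  · rintro ⟨h0, h1, h2, h3⟩
    exact ⟨⟨⟨h1, h2⟩, h3⟩, fun hcon => by omega⟩

lemma tau_mem {p i c c' : ℕ} (h4 : p % 4 = 3)
    (hcc : (c = 1 ∧ c' = 3) ∨ (c = 3 ∧ c' = 1)) {m : ℕ}
    (hm : m ∈ cop p (i+2) c \ cop p (i+1) c) :
    2 * p ^ (i+2) + 2 * p ^ (i+1) - m ∈ cop p (i+2) c' \ cop p (i+1) c' := by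
  rw [mem_sdiff_char h4] at hm ⊢
  obtain ⟨h0, h1, h2, h3⟩ := hm
  have hS4 : (2 * p ^ (i+2) + 2 * p ^ (i+1)) % 4 = 0 := by
    have hfac : 2 * p ^ (i+2) + 2 * p ^ (i+1) = (2 * p ^ (i+1)) * (p + 1) := by ring
    rw [hfac, Nat.mul_mod, Nat.mul_mod 2 (p ^ (i+1)), show (p+1) % 4 = 0 by omega]
    simp
  have hSd : p ∣ 2 * p ^ (i+2) + 2 * p ^ (i+1) := by
    have hfac : 2 * p ^ (i+2) + 2 * p ^ (i+1) = p * (2 * p ^ (i+1) + 2 * p ^ i) := by ring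
    exact hfac ▸ Dvd.intro _ rfl
  refine ⟨by omega, by omega, by omega, fun hcon => h3 ?_⟩
  have hd := Nat.dvd_sub hSd hcon
  rwa [Nat.sub_sub_self (by omega)] at hd

lemma sdiff_prod {p i : ℕ} (hp : p.Prime) (h4 : p % 4 = 3) :
    (∏ m ∈ cop p (i+2) 3 \ cop p (i+1) 3, (m : ZMod (p^2)))
      = ∏ m ∈ cop p (i+2) 1 \ cop p (i+1) 1, (m : ZMod (p^2)) := by
  haveI : Fact p.Prime := ⟨hp⟩
  set S : ℕ := 2 * p ^ (i+2) + 2 * p ^ (i+1) with hSdef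
  set w : ℕ := 2 * p ^ (i+1) + 2 * p ^ i with hwdef
  have hSw : S = p * w := by rw [hSdef, hwdef]; ring
  have hpp : (p : ZMod (p^2)) * (p : ZMod (p^2)) = 0 := by
    rw [show ((p:ZMod (p^2)) * p) = (((p*p : ℕ)) : ZMod (p^2)) by push_cast; ring,
      show p * p = p^2 by ring, ZMod.natCast_self]
  -- step 1 : reindex
  have step1 : (∏ m ∈ cop p (i+2) 3 \ cop p (i+1) 3, (m : ZMod (p^2)))
      = ∏ m ∈ cop p (i+2) 1 \ cop p (i+1) 1, ((S - m : ℕ) : ZMod (p^2)) := by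
    refine Finset.prod_nbij' (i := fun m => S - m) (j := fun m => S - m)
      (fun m hm => tau_mem h4 (Or.inr ⟨rfl, rfl⟩) hm)
      (fun m hm => tau_mem h4 (Or.inl ⟨rfl, rfl⟩) hm)
      (fun m hm => ?_) (fun m hm => ?_) (fun m hm => ?_)
    · rw [mem_sdiff_char h4] at hm
      have : p ^ (i+1) ≤ p ^ (i+2) := Nat.pow_le_pow_right (by omega) (by omega)
      omega
    · rw [mem_sdiff_char h4] at hm
      have : p ^ (i+1) ≤ p ^ (i+2) := Nat.pow_le_pow_right (by omega) (by omega)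
      omega
    · rw [mem_sdiff_char h4] at hm
      rw [Nat.sub_sub_self (by omega)]
  rw [step1]
  -- step 2 : pointwise rewrite
  have step2 : ∀ m ∈ cop p (i+2) 1 \ cop p (i+1) 1,
      ((S - m : ℕ) : ZMod (p^2))
        = (-(m : ZMod (p^2))) * (1 + (p : ZMod (p^2)) *
            (-(w : ZMod (p^2)) * ((m : ZMod (p^2)))⁻¹)) := by
    intro m hm
    have hmm := Finset.mem_sdiff.mp hm |>.1
    have hu := unit_of_cop hp hmm
    have hle : m ≤ S := by
      rw [mem_sdiff_char h4] at hm
      have : p ^ (i+1) ≤ p ^ (i+2) := Nat.pow_le_pow_right (by omega) (by omega)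
      omega
    rw [Nat.cast_sub hle, hSw]
    push_cast
    linear_combination (-((p : ZMod (p^2)) * (w : ZMod (p^2)))) * hu
  rw [Finset.prod_congr rfl step2, Finset.prod_mul_distrib]
  rw [prod_one_add hpp]
  have hsum : (p : ZMod (p^2)) * ∑ m ∈ cop p (i+2) 1 \ cop p (i+1) 1,
      (-(w : ZMod (p^2)) * ((m : ZMod (p^2)))⁻¹) = 0 := by
    rw [← Finset.mul_sum,
      Finset.sum_sdiff_eq_sub (cop_subset (by omega))]
    have z1 := psum_zero (p := p) (j := i+1) (c := 1) hp h4 (Or.inl rfl)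
    have z2 := psum_zero (p := p) (j := i) (c := 1) hp h4 (Or.inl rfl)
    linear_combination (-(w : ZMod (p^2))) * z1 + (w : ZMod (p^2)) * z2
  rw [hsum, add_zero, mul_one]
  have hneg : ∀ m ∈ cop p (i+2) 1 \ cop p (i+1) 1,
      (-(m : ZMod (p^2))) = (-1) * (m : ZMod (p^2)) := by intro m _; ring
  rw [Finset.prod_congr rfl hneg, Finset.prod_mul_distrib, Finset.prod_const,
    Even.neg_one_pow (card_sdiff_even h4), one_mul]

lemma keylemma {p i : ℕ} (hp : p.Prime) (h4 : p % 4 = 3) :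
    ((pp p (i+2) 3 : ZMod (p^2))) * (pp p (i+1) 1 : ZMod (p^2))
      = (pp p (i+2) 1 : ZMod (p^2)) * (pp p (i+1) 3 : ZMod (p^2)) := by
  have h3 : pp p (i+1) 3 * (∏ m ∈ cop p (i+2) 3 \ cop p (i+1) 3, m) = pp p (i+2) 3 := by
    rw [pp, pp, mul_comm]
    exact Finset.prod_sdiff (cop_subset (by have := hp.two_le; omega))
  have h1 : pp p (i+1) 1 * (∏ m ∈ cop p (i+2) 1 \ cop p (i+1) 1, m) = pp p (i+2) 1 := by
    rw [pp, pp, mul_comm]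
    exact Finset.prod_sdiff (cop_subset (by have := hp.two_le; omega))
  rw [← h3, ← h1]
  push_cast
  rw [sdiff_prod hp h4]
  ring

lemma pp_not_dvd {p j c : ℕ} (hp : p.Prime) : ¬ p ∣ pp p j c := by
  intro hdvd
  have hco : Nat.Coprime p (pp p j c) :=
    Nat.Coprime.prod_right (fun m hm => (Nat.Prime.coprime_iff_not_dvd hp).mpr (mem_cop.mp hm).2)
  exact hp.one_lt.ne' (Nat.Coprime.eq_one_of_dvd hco hdvd)

lemma phi {p : ℕ} (hp : p.Prime) (h4 : p % 4 = 3) (t : ℕ) :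
    ∃ (V a b : ℕ), gg p (2*t) 3 = p ^ V * a ∧ gg p (2*t) 1 = p ^ V * b ∧
      ¬ p ∣ a ∧ ¬ p ∣ b ∧ ((a : ZMod (p^2)) = (b : ZMod (p^2))) := by
  have hodd : p % 2 = 1 := by omega
  induction t with
  | zero =>
    refine ⟨0, 1, 1, ?_, ?_, by simpa using hp.one_lt.ne', by simpa using hp.one_lt.ne', rfl⟩
    · rw [gg]
      have : ball p 0 3 = ∅ := by
        ext m; rw [ball]; simp only [Finset.mem_filter, Finset.mem_range, pow_zero]
        constructor
        · rintro ⟨h1, h2⟩; omega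
        · rintro ⟨⟩
      simp [this]
    · rw [gg]
      have : ball p 0 1 = {1} := by
        ext m; rw [ball]; simp only [Finset.mem_filter, Finset.mem_range, pow_zero,
          Finset.mem_singleton]
        omega
      simp [this]
  | succ t ih =>
    obtain ⟨V, a, b, hga, hgb, hda, hdb, hab⟩ := ih
    have e3 : gg p (2*(t+1)) 3
        = pp p (2*t+2) 3 * (p ^ (ball p (2*t+1) 1).card * gg p (2*t+1) 1) := by
      rw [show 2*(t+1) = (2*t+1)+1 by ring]
      exact split h4 (Or.inr ⟨rfl, rfl⟩)
    have e3' : gg p (2*t+1) 1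
        = pp p (2*t+1) 1 * (p ^ (ball p (2*t) 3).card * gg p (2*t) 3) := by
      exact split h4 (Or.inl ⟨rfl, rfl⟩)
    have e1 : gg p (2*(t+1)) 1
        = pp p (2*t+2) 1 * (p ^ (ball p (2*t+1) 3).card * gg p (2*t+1) 3) := by
      rw [show 2*(t+1) = (2*t+1)+1 by ring]
      exact split h4 (Or.inl ⟨rfl, rfl⟩)
    have e1' : gg p (2*t+1) 3
        = pp p (2*t+1) 3 * (p ^ (ball p (2*t) 1).card * gg p (2*t) 1) := by
      exact split h4 (Or.inr ⟨rfl, rfl⟩)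
    -- counts
    have hcb1 := card_ball1 hodd (p := p) (2*t+1)
    have hcb2 := card_ball3 hodd (p := p) (2*t+1)
    have hcb3 := card_ball1 hodd (p := p) (2*t)
    have hcb4 := card_ball3 hodd (p := p) (2*t)
    refine ⟨V + (ball p (2*t+1) 1).card + (ball p (2*t) 3).card,
      pp p (2*t+2) 3 * pp p (2*t+1) 1 * a,
      pp p (2*t+2) 1 * pp p (2*t+1) 3 * b, ?_, ?_, ?_, ?_, ?_⟩
    · rw [e3, e3', hga]; ring
    · rw [e1, e1', hgb, show V + (ball p (2*t+1) 1).card + (ball p (2*t) 3).card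
        = V + (ball p (2*t+1) 3).card + (ball p (2*t) 1).card from by omega]
      ring
    · intro hd
      rcases (Nat.Prime.dvd_mul hp).mp hd with h | h
      · rcases (Nat.Prime.dvd_mul hp).mp h with h' | h'
        · exact pp_not_dvd hp h'
        · exact pp_not_dvd hp h'
      · exact hda h
    · intro hd
      rcases (Nat.Prime.dvd_mul hp).mp hd with h | h
      · rcases (Nat.Prime.dvd_mul hp).mp h with h' | h'
        · exact pp_not_dvd hp h'
        · exact pp_not_dvd hp h'
      · exact hdb h
    · push_cast
      rw [hab, keylemma hp h4 (i := 2*t)]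

lemma prodA {p : ℕ} (hodd : p % 2 = 1) (r : ℕ) :
    (∏ k ∈ Finset.Icc 1 ((p ^ (2 * r) - 1) / 2), (4 * (k : ℤ) - 1)) = (gg p (2*r) 3 : ℤ) := by
  have hM := pow_odd hodd (2*r)
  rw [gg, Nat.cast_prod]
  refine Finset.prod_nbij' (i := fun k => 4 * k - 1) (j := fun m => (m + 1) / 4)
    (fun k hk => ?_) (fun m hm => ?_) (fun k hk => ?_) (fun m hm => ?_) (fun k hk => ?_)
  · rw [Finset.mem_Icc] at hk; rw [mem_ball]; omega
  · rw [mem_ball] at hm; rw [Finset.mem_Icc]; omega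
  · rw [Finset.mem_Icc] at hk; omega
  · rw [mem_ball] at hm; omega
  · rw [Finset.mem_Icc] at hk; omega

lemma prodB {p : ℕ} (hodd : p % 2 = 1) (r : ℕ) :
    (∏ k ∈ Finset.Icc 1 ((p ^ (2 * r) - 1) / 2), (4 * (k : ℤ) + 1)) = (gg p (2*r) 1 : ℤ) := by
  have hM := pow_odd hodd (2*r)
  have h1mem : (1 : ℕ) ∈ ball p (2*r) 1 := by rw [mem_ball]; omega
  rw [gg, Nat.cast_prod, ← Finset.mul_prod_erase _ _ h1mem, Nat.cast_one, one_mul]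
  refine Finset.prod_nbij' (i := fun k => 4 * k + 1) (j := fun m => m / 4)
    (fun k hk => ?_) (fun m hm => ?_) (fun k hk => ?_) (fun m hm => ?_) (fun k hk => ?_)
  · rw [Finset.mem_Icc] at hk; rw [Finset.mem_erase, mem_ball]; omega
  · rw [Finset.mem_erase, mem_ball] at hm; rw [Finset.mem_Icc]; omega
  · rw [Finset.mem_Icc] at hk; omega
  · rw [Finset.mem_erase, mem_ball] at hm; omega
  · rw [Finset.mem_Icc] at hk; push_cast; ring

end GuoAux

theorem guo_conjecture (p : ℕ) (hp : p.Prime) (h4 : p % 4 = 3) (r : ℕ) (hr : 1 ≤ r) :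
    ∃ (v : ℕ) (a b : ℤ),
      (∏ k ∈ Finset.Icc 1 ((p ^ (2 * r) - 1) / 2), (4 * (k : ℤ) - 1)) = (p : ℤ) ^ v * a ∧
      (∏ k ∈ Finset.Icc 1 ((p ^ (2 * r) - 1) / 2), (4 * (k : ℤ) + 1)) = (p : ℤ) ^ v * b ∧
      ¬ (p : ℤ) ∣ a ∧ ¬ (p : ℤ) ∣ b ∧ (p : ℤ) ^ 2 ∣ (a - b) := by
  have hodd : p % 2 = 1 := by omega
  obtain ⟨V, a, b, hga, hgb, hda, hdb, hab⟩ := GuoAux.phi hp h4 r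
  refine ⟨V, (a : ℤ), (b : ℤ), ?_, ?_, ?_, ?_, ?_⟩
  · rw [GuoAux.prodA hodd r, hga]; push_cast; ring
  · rw [GuoAux.prodB hodd r, hgb]; push_cast; ring
  · rw [Int.natCast_dvd_natCast]; exact hda
  · rw [Int.natCast_dvd_natCast]; exact hdb
  · have hd := ((ZMod.natCast_eq_natCast_iff a b (p^2)).mp hab).dvd
    obtain ⟨c, hc⟩ := hd
    exact ⟨-c, by push_cast at hc ⊢; linarith⟩
end

section
/- Let p be a prime with p ≡ 3 (mod 4). Then ∏_{k=1}^{(p²-1)/2} (4k-1)/(4k+1) ≡ 1 (mod p²), in the sense that after removing the common power of p from numerator and denominator products, the resulting p-adic units are congruent modulo p². -/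
open Finset Filter

/- ## Auxiliary lemmas -/

private lemma prod_eq_of_inv {M : Type*} [CommMonoid M] :
    ∀ (s : Finset ℕ) (f g : ℕ → M) (ι : ℕ → ℕ),
    (∀ r ∈ s, ι r ∈ s) → (∀ r ∈ s, ι (ι r) = r) → (∀ r ∈ s, ι r ≠ r) →
    (∀ r ∈ s, f r * f (ι r) = g r * g (ι r)) →
    ∏ r ∈ s, f r = ∏ r ∈ s, g r := by
  intro s
  induction s using Finset.strongInduction with
  | _ s ih =>
    intro f g ι hmem hinv hne hpair
    rcases s.eq_empty_or_nonempty with rfl | ⟨a, ha⟩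
    · simp
    · have hιa : ι a ∈ s := hmem a ha
      have hnea : ι a ≠ a := hne a ha
      set t := (s.erase a).erase (ι a) with ht
      have hta : a ∉ t := by simp [ht]
      have htb : ι a ∉ t := by simp [ht]
      have hs : s = insert a (insert (ι a) t) := by
        ext x
        simp only [ht, Finset.mem_insert, Finset.mem_erase]
        constructor
        · intro hx
          by_cases h1 : x = a
          · tauto
          · by_cases h2 : x = ι a <;> tauto
        · rintro (rfl | rfl | ⟨h1, h2, h3⟩) <;> assumption
      have hsub : t ⊂ s := by
        refine Finset.ssubset_iff_of_subset ?_ |>.mpr ⟨a, ha, hta⟩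
        intro x hx
        simp only [ht, Finset.mem_erase] at hx
        exact hx.2.2
      have hmem' : ∀ r ∈ t, ι r ∈ t := by
        intro r hr
        simp only [ht, Finset.mem_erase] at hr ⊢
        refine ⟨?_, ?_, hmem r hr.2.2⟩
        · intro h; exact hr.2.1 (by rw [← hinv r hr.2.2, h, hinv a ha])
        · intro h; exact hr.1 (by rw [← hinv r hr.2.2, h])
      have key := ih t hsub f g ι hmem' (fun r hr => hinv r (hsub.1 hr))
        (fun r hr => hne r (hsub.1 hr)) (fun r hr => hpair r (hsub.1 hr))
      rw [hs, Finset.prod_insert (by simp [Finset.mem_insert, hnea.symm, hta] : a ∉ insert (ι a) t),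
          Finset.prod_insert htb, Finset.prod_insert (by simp [Finset.mem_insert, hnea.symm, hta] : a ∉ insert (ι a) t),
          Finset.prod_insert htb, ← mul_assoc, ← mul_assoc, hpair a ha, key]

private lemma prod_Ioc_blocks {M : Type*} [CommMonoid M] (p : ℕ) (F : ℕ → M) :
    ∀ m : ℕ, ∏ k ∈ Ioc 0 (p*m), F k = ∏ i ∈ range m, ∏ r ∈ Ioc 0 p, F (p*i + r) := by
  intro m
  induction m with
  | zero => simp
  | succ m ih =>
    rw [Finset.prod_range_succ, ← ih,
      ← Finset.prod_Ioc_consecutive F (Nat.zero_le (p*m)) (by nlinarith : p*m ≤ p*(m+1))]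
    congr 1
    have : Ioc (p*m) (p*(m+1)) = (Ioc 0 p).map (addLeftEmbedding (p*m)) := by
      rw [Finset.map_add_left_Ioc]; congr 1
    rw [this, Finset.prod_map]
    rfl

private lemma prod_range_blocks {M : Type*} [CommMonoid M] (p : ℕ) (F : ℕ → M) :
    ∀ m : ℕ, ∏ k ∈ range (p*m), F k = ∏ i ∈ range m, ∏ r ∈ range p, F (p*i + r) := by
  intro m
  induction m with
  | zero => simp
  | succ m ih =>
    rw [Finset.prod_range_succ, ← ih]
    simp only [Finset.range_eq_Ico]
    rw [← Finset.prod_Ico_consecutive F (Nat.zero_le (p*m)) (by nlinarith : p*m ≤ p*(m+1))]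
    congr 1
    have : Ico (p*m) (p*(m+1)) = (Ico 0 p).map (addLeftEmbedding (p*m)) := by
      rw [Finset.map_add_left_Ico]; congr 1
    rw [this, Finset.prod_map]
    rfl

/- ## Integer factorizations -/

private lemma S1 (p q r₀ N : ℕ) (hq : 2*q+1 = p) (hr₀ : 4*r₀ = p+1) (hN : N = p*q+q) :
    ∏ k ∈ Icc 1 N, (4*(k:ℤ)-1) =
    (p:ℤ)^(q+1) * ((∏ i ∈ range (q+1), (4*(i:ℤ)+1)) *
      (∏ i ∈ range q, ∏ r ∈ (Ioc 0 p).erase r₀, (4*((p*i+r : ℕ):ℤ)-1)) *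
      (∏ r ∈ (Ioc 0 q).erase r₀, (4*((p*q+r : ℕ):ℤ)-1))) := by
  have hr₀q : r₀ ∈ Ioc 0 q := by simp only [Finset.mem_Ioc]; omega
  have hr₀p : r₀ ∈ Ioc 0 p := by simp only [Finset.mem_Ioc]; omega
  have hcast : (4*(r₀:ℤ)) = (p:ℤ)+1 := by exact_mod_cast congrArg (Nat.cast (R := ℤ)) hr₀
  have hIcc : Icc 1 N = Ioc 0 N := by ext x; simp only [Finset.mem_Icc, Finset.mem_Ioc]; omega
  rw [hIcc, hN, ← Finset.prod_Ioc_consecutive _ (Nat.zero_le (p*q)) (Nat.le_add_right _ q)]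
  rw [prod_Ioc_blocks]
  have htail : Ioc (p*q) (p*q+q) = (Ioc 0 q).map (addLeftEmbedding (p*q)) := by
    rw [Finset.map_add_left_Ioc]; simp
  rw [htail, Finset.prod_map]
  have hblock : ∀ i ∈ range q, (∏ r ∈ Ioc 0 p, (4*((p*i+r : ℕ):ℤ)-1))
      = ((p:ℤ) * (4*(i:ℤ)+1)) * ∏ r ∈ (Ioc 0 p).erase r₀, (4*((p*i+r : ℕ):ℤ)-1) := by
    intro i _
    rw [← Finset.mul_prod_erase (Ioc 0 p) _ hr₀p]
    congr 1
    push_cast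
    linear_combination hcast
  rw [Finset.prod_congr rfl hblock, Finset.prod_mul_distrib, Finset.prod_mul_distrib,
    Finset.prod_const]
  simp only [addLeftEmbedding_apply]
  rw [← Finset.mul_prod_erase (Ioc 0 q) (fun r => 4*((p*q+r : ℕ):ℤ)-1) hr₀q]
  have htf : (4*((p*q+r₀:ℕ):ℤ)-1) = (p:ℤ)*(4*(q:ℤ)+1) := by
    push_cast; linear_combination hcast
  rw [htf, Finset.prod_range_succ, Finset.card_range]
  ring

private lemma S2 (p q r₁ i₁ N : ℕ) (hq : 2*q+1 = p) (hr₁ : 4*r₁+1 = 3*p) (hi₁ : 4*i₁+3 = p)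
    (hN : N = p*q+q) :
    ∏ k ∈ Icc 1 N, (4*(k:ℤ)+1) =
    (p:ℤ)^(q+1) * ((∏ i ∈ (range q).erase i₁, (4*(i:ℤ)+3)) *
      (∏ i ∈ range q, ∏ r ∈ (range p).erase r₁, (4*((p*i+r : ℕ):ℤ)+1)) *
      (∏ r ∈ range (q+1), (4*((p*q+r : ℕ):ℤ)+1))) := by
  have hr₁p : r₁ ∈ range p := by simp only [Finset.mem_range]; omega
  have hi₁q : i₁ ∈ range q := by simp only [Finset.mem_range]; omega
  have hcast : (4*(r₁:ℤ))+1 = 3*(p:ℤ) := by exact_mod_cast congrArg (Nat.cast (R := ℤ)) hr₁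
  have hcast2 : (4*(i₁:ℤ))+3 = (p:ℤ) := by exact_mod_cast congrArg (Nat.cast (R := ℤ)) hi₁
  have h0 : ∏ k ∈ Icc 1 N, (4*(k:ℤ)+1) = ∏ k ∈ range (N+1), (4*(k:ℤ)+1) := by
    have : range (N+1) = insert 0 (Icc 1 N) := by
      ext x; simp only [Finset.mem_range, Finset.mem_insert, Finset.mem_Icc]; omega
    rw [this, Finset.prod_insert (by simp)]
    norm_num
  rw [h0, show N+1 = p*q + (q+1) by omega, Finset.range_eq_Ico,
    ← Finset.prod_Ico_consecutive _ (Nat.zero_le (p*q)) (Nat.le_add_right _ (q+1)),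
    ← Finset.range_eq_Ico, prod_range_blocks]
  have htail : Ico (p*q) (p*q+(q+1)) = (range (q+1)).map (addLeftEmbedding (p*q)) := by
    rw [Finset.range_eq_Ico, Finset.map_add_left_Ico]; simp
  rw [htail, Finset.prod_map]
  simp only [addLeftEmbedding_apply]
  have hblock : ∀ i ∈ range q, (∏ r ∈ range p, (4*((p*i+r : ℕ):ℤ)+1))
      = ((p:ℤ) * (4*(i:ℤ)+3)) * ∏ r ∈ (range p).erase r₁, (4*((p*i+r : ℕ):ℤ)+1) := by
    intro i _
    rw [← Finset.mul_prod_erase (range p) _ hr₁p]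
    congr 1
    push_cast
    linear_combination hcast
  rw [Finset.prod_congr rfl hblock, Finset.prod_mul_distrib, Finset.prod_mul_distrib,
    Finset.prod_const, Finset.card_range,
    ← Finset.mul_prod_erase (range q) (fun i => (4*(i:ℤ)+3)) hi₁q, hcast2]
  ring

/- ## Congruences mod p² -/

private lemma hp2_lemma (p : ℕ) : ((p : ZMod (p^2)))^2 = 0 := by
  have := ZMod.natCast_self (p^2)
  push_cast at this
  exact this

private lemma cong_neg (p r₀ : ℕ) (hr₀ : 4*r₀ = p+1) (n : ℕ) (hnn : n = p ∨ 2*n+1 = p) (w : ℕ) :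
    ∏ r ∈ (Ioc 0 n).erase r₀, ((p:ZMod (p^2)) * (w:ZMod (p^2)) + (4*(r:ZMod (p^2))-1))
    = ∏ r ∈ (Ioc 0 n).erase r₀, (4*(r:ZMod (p^2))-1) := by
  have hp2 := hp2_lemma p
  have h4 : (4:ZMod (p^2))*(r₀:ZMod (p^2)) = (p:ZMod (p^2))+1 := by
    exact_mod_cast congrArg (Nat.cast (R := ZMod (p^2))) hr₀
  apply prod_eq_of_inv _ _ _ (fun r => if r < 2*r₀ then 2*r₀ - r else 2*r₀ + p - r)
  · intro r hr
    simp only [Finset.mem_erase, Finset.mem_Ioc] at hr ⊢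
    split_ifs <;> omega
  · intro r hr
    simp only [Finset.mem_erase, Finset.mem_Ioc] at hr
    split_ifs <;> omega
  · intro r hr
    simp only [Finset.mem_erase, Finset.mem_Ioc] at hr
    split_ifs <;> omega
  · intro r hr
    simp only [Finset.mem_erase, Finset.mem_Ioc] at hr
    have hsum : r + (if r < 2*r₀ then 2*r₀ - r else 2*r₀ + p - r) = 2*r₀ ∨
        r + (if r < 2*r₀ then 2*r₀ - r else 2*r₀ + p - r) = 2*r₀ + p := by
      split_ifs <;> omega
    set m := (if r < 2*r₀ then 2*r₀ - r else 2*r₀ + p - r) with hm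
    rcases hsum with h | h
    · have h' : (r:ZMod (p^2)) + (m:ZMod (p^2)) = 2*(r₀:ZMod (p^2)) := by
        exact_mod_cast congrArg (Nat.cast (R := ZMod (p^2))) h
      set P := (p:ZMod (p^2))
      linear_combination (4*P*(w:ZMod (p^2)))*h' + (2*P*(w:ZMod (p^2)))*h4
        + (2*(w:ZMod (p^2)) + (w:ZMod (p^2))^2)*hp2
    · have h' : (r:ZMod (p^2)) + (m:ZMod (p^2)) = 2*(r₀:ZMod (p^2)) + (p:ZMod (p^2)) := by
        exact_mod_cast congrArg (Nat.cast (R := ZMod (p^2))) h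
      set P := (p:ZMod (p^2))
      linear_combination (4*P*(w:ZMod (p^2)))*h' + (2*P*(w:ZMod (p^2)))*h4
        + (6*(w:ZMod (p^2)) + (w:ZMod (p^2))^2)*hp2

private lemma cong_pos (p q r₁ : ℕ) (hq : 2*q+1 = p) (hr₁ : 4*r₁+1 = 3*p) (n : ℕ)
    (hnn : n = p ∨ n = q+1) (w : ℕ) :
    ∏ r ∈ (range n).erase r₁, ((p:ZMod (p^2)) * (w:ZMod (p^2)) + (4*(r:ZMod (p^2))+1))
    = ∏ r ∈ (range n).erase r₁, (4*(r:ZMod (p^2))+1) := by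
  have hp2 := hp2_lemma p
  have hqc : 2*(q:ZMod (p^2))+1 = (p:ZMod (p^2)) := by
    exact_mod_cast congrArg (Nat.cast (R := ZMod (p^2))) hq
  have h4 : (4:ZMod (p^2))*(r₁:ZMod (p^2))+1 = 3*(p:ZMod (p^2)) := by
    exact_mod_cast congrArg (Nat.cast (R := ZMod (p^2))) hr₁
  apply prod_eq_of_inv _ _ _ (fun r => if r ≤ q then q - r else 2*r₁ - r)
  · intro r hr
    simp only [Finset.mem_erase, Finset.mem_range] at hr ⊢
    split_ifs <;> omega
  · intro r hr
    simp only [Finset.mem_erase, Finset.mem_range] at hr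
    split_ifs <;> omega
  · intro r hr
    simp only [Finset.mem_erase, Finset.mem_range] at hr
    split_ifs <;> omega
  · intro r hr
    simp only [Finset.mem_erase, Finset.mem_range] at hr
    have hsum : r + (if r ≤ q then q - r else 2*r₁ - r) = q ∨
        r + (if r ≤ q then q - r else 2*r₁ - r) = 2*r₁ := by
      split_ifs <;> omega
    set m := (if r ≤ q then q - r else 2*r₁ - r) with hm
    rcases hsum with h | h
    · have h' : (r:ZMod (p^2)) + (m:ZMod (p^2)) = (q:ZMod (p^2)) := by
        exact_mod_cast congrArg (Nat.cast (R := ZMod (p^2))) h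
      set P := (p:ZMod (p^2))
      linear_combination (4*P*(w:ZMod (p^2)))*h' + (2*P*(w:ZMod (p^2)))*hqc
        + (2*(w:ZMod (p^2)) + (w:ZMod (p^2))^2)*hp2
    · have h' : (r:ZMod (p^2)) + (m:ZMod (p^2)) = 2*(r₁:ZMod (p^2)) := by
        exact_mod_cast congrArg (Nat.cast (R := ZMod (p^2))) h
      set P := (p:ZMod (p^2))
      linear_combination (4*P*(w:ZMod (p^2)))*h' + (2*P*(w:ZMod (p^2)))*h4
        + (6*(w:ZMod (p^2)) + (w:ZMod (p^2))^2)*hp2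

private lemma cong_flip (p q r₀ r₁ : ℕ) (hq : 2*q+1 = p) (hr₀ : 4*r₀ = p+1)
    (hr₁ : 4*r₁+1 = 3*p) :
    ∏ r ∈ (range p).erase r₁, (4*(r:ZMod (p^2))+1)
    = ∏ r ∈ (Ioc 0 p).erase r₀, (4*(r:ZMod (p^2))-1) := by
  have hp2 := hp2_lemma p
  have h4 : (4:ZMod (p^2))*(r₀:ZMod (p^2)) = (p:ZMod (p^2))+1 := by
    exact_mod_cast congrArg (Nat.cast (R := ZMod (p^2))) hr₀
  have step1 : ∏ r ∈ (range p).erase r₁, (4*(r:ZMod (p^2))+1)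
      = ∏ u ∈ (Ioc 0 p).erase r₀, (4*(p:ZMod (p^2)) - (4*(u:ZMod (p^2))-1)) := by
    apply Finset.prod_nbij' (fun r => p - r) (fun u => p - u)
    · intro a ha; simp only [Finset.mem_erase, Finset.mem_range, Finset.mem_Ioc] at ha ⊢; omega
    · intro a ha; simp only [Finset.mem_erase, Finset.mem_range, Finset.mem_Ioc] at ha ⊢; omega
    · intro a ha; simp only [Finset.mem_erase, Finset.mem_range] at ha; omega
    · intro a ha; simp only [Finset.mem_erase, Finset.mem_Ioc] at ha; omega
    · intro a ha
      simp only [Finset.mem_erase, Finset.mem_range] at ha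
      have hle : a ≤ p := by omega
      push_cast [Nat.cast_sub hle]
      ring
  rw [step1]
  apply prod_eq_of_inv _ _ _ (fun r => if r < 2*r₀ then 2*r₀ - r else 2*r₀ + p - r)
  · intro r hr
    simp only [Finset.mem_erase, Finset.mem_Ioc] at hr ⊢
    split_ifs <;> omega
  · intro r hr
    simp only [Finset.mem_erase, Finset.mem_Ioc] at hr
    split_ifs <;> omega
  · intro r hr
    simp only [Finset.mem_erase, Finset.mem_Ioc] at hr
    split_ifs <;> omega
  · intro r hr
    simp only [Finset.mem_erase, Finset.mem_Ioc] at hr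
    have hsum : r + (if r < 2*r₀ then 2*r₀ - r else 2*r₀ + p - r) = 2*r₀ ∨
        r + (if r < 2*r₀ then 2*r₀ - r else 2*r₀ + p - r) = 2*r₀ + p := by
      split_ifs <;> omega
    set m := (if r < 2*r₀ then 2*r₀ - r else 2*r₀ + p - r) with hm
    rcases hsum with h | h
    · have h' : (r:ZMod (p^2)) + (m:ZMod (p^2)) = 2*(r₀:ZMod (p^2)) := by
        exact_mod_cast congrArg (Nat.cast (R := ZMod (p^2))) h
      set P := (p:ZMod (p^2))
      linear_combination (-16*P)*h' + (-8*P)*h4 + 8*hp2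
    · have h' : (r:ZMod (p^2)) + (m:ZMod (p^2)) = 2*(r₀:ZMod (p^2)) + (p:ZMod (p^2)) := by
        exact_mod_cast congrArg (Nat.cast (R := ZMod (p^2))) h
      set P := (p:ZMod (p^2))
      linear_combination (-16*P)*h' + (-8*P)*h4 + (-8)*hp2

private lemma V3_eq (p q r₀ i₁ : ℕ) (hr₀ : 4*r₀ = p+1) (hi₁ : 4*i₁+3 = p) :
    ∏ i ∈ (range q).erase i₁, (4*(i:ZMod (p^2))+3)
    = ∏ r ∈ (Ioc 0 q).erase r₀, (4*(r:ZMod (p^2))-1) := by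
  apply Finset.prod_nbij' (fun i => i + 1) (fun r => r - 1)
  · intro a ha; simp only [Finset.mem_erase, Finset.mem_range, Finset.mem_Ioc] at ha ⊢; omega
  · intro a ha; simp only [Finset.mem_erase, Finset.mem_range, Finset.mem_Ioc] at ha ⊢; omega
  · intro a ha; omega
  · intro a ha; simp only [Finset.mem_erase, Finset.mem_Ioc] at ha; omega
  · intro a ha
    push_cast
    ring

private lemma no_small_multiple (p m : ℕ) (hm : p ∣ m) (hb : m < 4*p) :
    m = 0 ∨ m = p ∨ m = 2*p ∨ m = 3*p := by
  obtain ⟨c, hc⟩ := hm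
  have hc4 : c < 4 := by
    by_contra h
    push_neg at h
    have h2 : p*4 ≤ p*c := Nat.mul_le_mul_left p h
    have h3 : 4*p ≤ m := by omega
    omega
  interval_cases c <;> omega

private lemma ndvd_a (p q r₀ : ℕ) (hp : p.Prime) (h4 : p % 4 = 3) (hq : 2*q+1 = p)
    (hr₀ : 4*r₀ = p+1) :
    ¬ (p:ℤ) ∣ ((∏ i ∈ range (q+1), (4*(i:ℤ)+1)) *
      (∏ i ∈ range q, ∏ r ∈ (Ioc 0 p).erase r₀, (4*((p*i+r : ℕ):ℤ)-1)) *
      (∏ r ∈ (Ioc 0 q).erase r₀, (4*((p*q+r : ℕ):ℤ)-1))) := by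
  haveI : Fact p.Prime := ⟨hp⟩
  intro hdvd
  have h0 : ((((∏ i ∈ range (q+1), (4*(i:ℤ)+1)) *
      (∏ i ∈ range q, ∏ r ∈ (Ioc 0 p).erase r₀, (4*((p*i+r : ℕ):ℤ)-1)) *
      (∏ r ∈ (Ioc 0 q).erase r₀, (4*((p*q+r : ℕ):ℤ)-1))) : ℤ) : ZMod p) = 0 := by
    rw [ZMod.intCast_zmod_eq_zero_iff_dvd]
    exact_mod_cast hdvd
  push_cast at h0
  simp only [ZMod.natCast_self, zero_mul, zero_add] at h0
  rcases mul_eq_zero.mp h0 with h1 | h1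
  · rcases mul_eq_zero.mp h1 with h2 | h2
    · obtain ⟨i, hi, hz⟩ := Finset.prod_eq_zero_iff.mp h2
      rw [Finset.mem_range] at hi
      have hz' : ((4*i+1 : ℕ) : ZMod p) = 0 := by push_cast; linear_combination hz
      rw [ZMod.natCast_eq_zero_iff] at hz'
      have := no_small_multiple p _ hz' (by omega)
      omega
    · obtain ⟨i, hi, hz⟩ := Finset.prod_eq_zero_iff.mp h2
      obtain ⟨r, hr, hz2⟩ := Finset.prod_eq_zero_iff.mp hz
      simp only [Finset.mem_erase, Finset.mem_Ioc] at hr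
      have hz' : ((4*r-1 : ℕ) : ZMod p) = 0 := by
        push_cast [Nat.cast_sub (show 1 ≤ 4*r by omega)]
        linear_combination hz2
      rw [ZMod.natCast_eq_zero_iff] at hz'
      have := no_small_multiple p _ hz' (by omega)
      omega
  · obtain ⟨r, hr, hz2⟩ := Finset.prod_eq_zero_iff.mp h1
    simp only [Finset.mem_erase, Finset.mem_Ioc] at hr
    have hz' : ((4*r-1 : ℕ) : ZMod p) = 0 := by
      push_cast [Nat.cast_sub (show 1 ≤ 4*r by omega)]
      linear_combination hz2
    rw [ZMod.natCast_eq_zero_iff] at hz'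
    have := no_small_multiple p _ hz' (by omega)
    omega

private lemma ndvd_b (p q r₁ i₁ : ℕ) (hp : p.Prime) (h4 : p % 4 = 3) (hq : 2*q+1 = p)
    (hr₁ : 4*r₁+1 = 3*p) (hi₁ : 4*i₁+3 = p) :
    ¬ (p:ℤ) ∣ ((∏ i ∈ (range q).erase i₁, (4*(i:ℤ)+3)) *
      (∏ i ∈ range q, ∏ r ∈ (range p).erase r₁, (4*((p*i+r : ℕ):ℤ)+1)) *
      (∏ r ∈ range (q+1), (4*((p*q+r : ℕ):ℤ)+1))) := by
  haveI : Fact p.Prime := ⟨hp⟩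
  intro hdvd
  have h0 : ((((∏ i ∈ (range q).erase i₁, (4*(i:ℤ)+3)) *
      (∏ i ∈ range q, ∏ r ∈ (range p).erase r₁, (4*((p*i+r : ℕ):ℤ)+1)) *
      (∏ r ∈ range (q+1), (4*((p*q+r : ℕ):ℤ)+1))) : ℤ) : ZMod p) = 0 := by
    rw [ZMod.intCast_zmod_eq_zero_iff_dvd]
    exact_mod_cast hdvd
  push_cast at h0
  simp only [ZMod.natCast_self, zero_mul, zero_add] at h0
  rcases mul_eq_zero.mp h0 with h1 | h1
  · rcases mul_eq_zero.mp h1 with h2 | h2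
    · obtain ⟨i, hi, hz⟩ := Finset.prod_eq_zero_iff.mp h2
      simp only [Finset.mem_erase, Finset.mem_range] at hi
      have hz' : ((4*i+3 : ℕ) : ZMod p) = 0 := by push_cast; linear_combination hz
      rw [ZMod.natCast_eq_zero_iff] at hz'
      have := no_small_multiple p _ hz' (by omega)
      omega
    · obtain ⟨i, hi, hz⟩ := Finset.prod_eq_zero_iff.mp h2
      obtain ⟨r, hr, hz2⟩ := Finset.prod_eq_zero_iff.mp hz
      simp only [Finset.mem_erase, Finset.mem_range] at hr
      have hz' : ((4*r+1 : ℕ) : ZMod p) = 0 := by push_cast; linear_combination hz2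
      rw [ZMod.natCast_eq_zero_iff] at hz'
      have := no_small_multiple p _ hz' (by omega)
      omega
  · obtain ⟨r, hr, hz2⟩ := Finset.prod_eq_zero_iff.mp h1
    rw [Finset.mem_range] at hr
    have hz' : ((4*r+1 : ℕ) : ZMod p) = 0 := by push_cast; linear_combination hz2
    rw [ZMod.natCast_eq_zero_iff] at hz'
    have := no_small_multiple p _ hz' (by omega)
    omega

private lemma main_cong (p q r₀ r₁ i₁ : ℕ) (hq : 2*q+1 = p) (hr₀ : 4*r₀ = p+1)
    (hr₁ : 4*r₁+1 = 3*p) (hi₁ : 4*i₁+3 = p) :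
    ((((∏ i ∈ range (q+1), (4*(i:ℤ)+1)) *
      (∏ i ∈ range q, ∏ r ∈ (Ioc 0 p).erase r₀, (4*((p*i+r : ℕ):ℤ)-1)) *
      (∏ r ∈ (Ioc 0 q).erase r₀, (4*((p*q+r : ℕ):ℤ)-1))) : ℤ) : ZMod (p^2))
    = ((((∏ i ∈ (range q).erase i₁, (4*(i:ℤ)+3)) *
      (∏ i ∈ range q, ∏ r ∈ (range p).erase r₁, (4*((p*i+r : ℕ):ℤ)+1)) *
      (∏ r ∈ range (q+1), (4*((p*q+r : ℕ):ℤ)+1))) : ℤ) : ZMod (p^2)) := by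
  have hr₁q : r₁ ∉ range (q+1) := by simp only [Finset.mem_range]; omega
  have e1 : ((((∏ i ∈ range (q+1), (4*(i:ℤ)+1)) *
      (∏ i ∈ range q, ∏ r ∈ (Ioc 0 p).erase r₀, (4*((p*i+r : ℕ):ℤ)-1)) *
      (∏ r ∈ (Ioc 0 q).erase r₀, (4*((p*q+r : ℕ):ℤ)-1))) : ℤ) : ZMod (p^2))
      = (∏ i ∈ range (q+1), (4*(i:ZMod (p^2))+1)) *
        (∏ i ∈ range q, ∏ r ∈ (Ioc 0 p).erase r₀,
          ((p:ZMod (p^2)) * ((4*i : ℕ):ZMod (p^2)) + (4*(r:ZMod (p^2))-1))) *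
        (∏ r ∈ (Ioc 0 q).erase r₀,
          ((p:ZMod (p^2)) * ((4*q : ℕ):ZMod (p^2)) + (4*(r:ZMod (p^2))-1))) := by
    push_cast
    congr 1
    · congr 1
      apply Finset.prod_congr rfl; intro i _
      apply Finset.prod_congr rfl; intro r _
      push_cast; ring
    · apply Finset.prod_congr rfl; intro r _
      push_cast; ring
  have e2 : ((((∏ i ∈ (range q).erase i₁, (4*(i:ℤ)+3)) *
      (∏ i ∈ range q, ∏ r ∈ (range p).erase r₁, (4*((p*i+r : ℕ):ℤ)+1)) *
      (∏ r ∈ range (q+1), (4*((p*q+r : ℕ):ℤ)+1))) : ℤ) : ZMod (p^2))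
      = (∏ i ∈ (range q).erase i₁, (4*(i:ZMod (p^2))+3)) *
        (∏ i ∈ range q, ∏ r ∈ (range p).erase r₁,
          ((p:ZMod (p^2)) * ((4*i : ℕ):ZMod (p^2)) + (4*(r:ZMod (p^2))+1))) *
        (∏ r ∈ (range (q+1)).erase r₁,
          ((p:ZMod (p^2)) * ((4*q : ℕ):ZMod (p^2)) + (4*(r:ZMod (p^2))+1))) := by
    rw [Finset.erase_eq_of_notMem hr₁q]
    push_cast
    congr 1
    · congr 1
      apply Finset.prod_congr rfl; intro i _
      apply Finset.prod_congr rfl; intro r _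
      push_cast; ring
    · apply Finset.prod_congr rfl; intro r _
      push_cast; ring
  rw [e1, e2]
  rw [Finset.prod_congr rfl (fun i _ => cong_neg p r₀ hr₀ p (Or.inl rfl) (4*i)),
      Finset.prod_congr rfl (fun i _ => cong_pos p q r₁ hq hr₁ p (Or.inl rfl) (4*i)),
      cong_neg p r₀ hr₀ q (Or.inr hq) (4*q),
      cong_pos p q r₁ hq hr₁ (q+1) (Or.inr rfl) (4*q),
      Finset.prod_const, Finset.prod_const, Finset.card_range,
      cong_flip p q r₀ r₁ hq hr₀ hr₁, V3_eq p q r₀ i₁ hr₀ hi₁,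
      Finset.erase_eq_of_notMem hr₁q]
  ring

theorem guo_conjecture_r_one (p : ℕ) (hp : p.Prime) (h4 : p % 4 = 3) :
    ∃ (v : ℕ) (a b : ℤ),
      (∏ k ∈ Finset.Icc 1 (((p ^ 2 - 1) / 2 : ℕ)), (4 * (k : ℤ) - 1)) = (p : ℤ) ^ v * a ∧
      (∏ k ∈ Finset.Icc 1 (((p ^ 2 - 1) / 2 : ℕ)), (4 * (k : ℤ) + 1)) = (p : ℤ) ^ v * b ∧
      ¬ (p : ℤ) ∣ a ∧ ¬ (p : ℤ) ∣ b ∧ (p : ℤ) ^ 2 ∣ (a - b) := by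
  have hp2 : 2 ≤ p := hp.two_le
  have hp3 : 3 ≤ p := by omega
  set q := (p-1)/2 with hqdef
  set r₀ := (p+1)/4 with hr₀def
  set r₁ := (3*p-1)/4 with hr₁def
  set i₁ := (p-3)/4 with hi₁def
  have hq : 2*q+1 = p := by omega
  have hr₀ : 4*r₀ = p+1 := by omega
  have hr₁ : 4*r₁+1 = 3*p := by omega
  have hi₁ : 4*i₁+3 = p := by omega
  have hN : (p^2-1)/2 = p*q+q := by
    have h1 : p^2 = 2*(p*q+q)+1 := by
      rw [show p = 2*q+1 from hq.symm]; ring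
    omega
  refine ⟨q+1,
    ((∏ i ∈ range (q+1), (4*(i:ℤ)+1)) *
      (∏ i ∈ range q, ∏ r ∈ (Ioc 0 p).erase r₀, (4*((p*i+r : ℕ):ℤ)-1)) *
      (∏ r ∈ (Ioc 0 q).erase r₀, (4*((p*q+r : ℕ):ℤ)-1))),
    ((∏ i ∈ (range q).erase i₁, (4*(i:ℤ)+3)) *
      (∏ i ∈ range q, ∏ r ∈ (range p).erase r₁, (4*((p*i+r : ℕ):ℤ)+1)) *
      (∏ r ∈ range (q+1), (4*((p*q+r : ℕ):ℤ)+1))), ?_, ?_, ?_, ?_, ?_⟩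
  · rw [hN]; exact S1 p q r₀ (p*q+q) hq hr₀ rfl
  · rw [hN]; exact S2 p q r₁ i₁ (p*q+q) hq hr₁ hi₁ rfl
  · exact ndvd_a p q r₀ hp h4 hq hr₀
  · exact ndvd_b p q r₁ i₁ hp h4 hq hr₁ hi₁
  · have hcong := main_cong p q r₀ r₁ i₁ hq hr₀ hr₁ hi₁
    have hz := sub_eq_zero.mpr hcong
    rw [← Int.cast_sub, ZMod.intCast_zmod_eq_zero_iff_dvd] at hz
    exact_mod_cast hz
end

section
/- Let p be a prime with p ≡ 3 (mod 4). Then in ℤ_p, Γ_p((2p+3)/4)·Γ_p(1/4) ≡ Γ_p((2p+1)/4)·Γ_p(3/4) (mod p²), where (2p+1)/4 and (2p+3)/4 denote the p-adic numbers obtained by dividing by the unit 4. -/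
/-!
Reduce modulo `p²`. On `ℕ`, `Γ_p(n + p^k) ≡ Γ_p(n) (mod p^k)` because the units of `ℤ/p^k`
multiply to `-1` (their only square roots of `1` are `±1`); hence `Γ_p` is `1`-Lipschitz and the
four values only depend on the arguments modulo `p²`. These are congruent to naturals `a`, `b`,
`a + c`, `b + c` with `a ≡ 1/4`, `b ≡ 3/4`, `c ≡ p/2` and `a + b = p² + 1`, so the claim becomes
`∏ (j + c) ≡ ∏ j (mod p²)`, both products over the `j ∈ [b, a)` prime to `p`. As `c² ≡ 0`, the
difference is `c · ∏ j · ∑ 1/j`, and `∑ 1/j ≡ 0` since `j ↦ a + b - 1 - j ≡ -j` permutes the range.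
-/

open Finset Filter

theorem DenseRange.comap_nhds_neBot {α X : Type*} [TopologicalSpace X] {i : α → X}
    (hi : DenseRange i) (x : X) : (comap i (nhds x)).NeBot := by
  rw [← comap_nhdsWithin_range]
  exact (hi.nhdsWithin_neBot x).comap_of_range_mem self_mem_nhdsWithin

section DenseLipschitzExtension

variable {α X Y : Type*} [PseudoMetricSpace X] [PseudoMetricSpace Y] [CompleteSpace Y] [Nonempty Y]
  {i : α → X} {f : α → Y}

theorem tendsto_limUnder_comap_of_dist_le (hi : DenseRange i)
    (hf : ∀ a b, dist (f a) (f b) ≤ dist (i a) (i b)) (x : X) :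
    Tendsto f (comap i (nhds x)) (nhds (limUnder (comap i (nhds x)) f)) := by
  have := hi.comap_nhds_neBot x
  refine tendsto_nhds_limUnder (cauchy_map_iff_exists_tendsto.mp ?_)
  refine Metric.cauchy_iff.mpr ⟨inferInstance, fun ε hε => ?_⟩
  refine ⟨f '' (i ⁻¹' Metric.ball x (ε / 2)),
    image_mem_map (preimage_mem_comap (Metric.ball_mem_nhds x (half_pos hε))), ?_⟩
  rintro _ ⟨a, ha, rfl⟩ _ ⟨b, hb, rfl⟩
  calc dist (f a) (f b) ≤ dist (i a) (i b) := hf a b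
    _ ≤ dist (i a) x + dist x (i b) := dist_triangle _ _ _
    _ < ε / 2 + ε / 2 := add_lt_add (Metric.mem_ball.mp ha) (Metric.mem_ball'.mp hb)
    _ = ε := add_halves ε

theorem dist_limUnder_comap_le (hi : DenseRange i)
    (hf : ∀ a b, dist (f a) (f b) ≤ dist (i a) (i b)) (x : X) (a : α) :
    dist (limUnder (comap i (nhds x)) f) (f a) ≤ dist x (i a) := by
  have := hi.comap_nhds_neBot x
  exact le_of_tendsto_of_tendsto'
    ((tendsto_limUnder_comap_of_dist_le hi hf x).dist tendsto_const_nhds)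
    (tendsto_comap.dist tendsto_const_nhds) fun b => hf b a

end DenseLipschitzExtension

namespace PadicInt

variable {p : ℕ} [Fact p.Prime]

theorem toZModPow_eq_iff_pow_dvd_sub {k : ℕ} {x y : ℤ_[p]} :
    toZModPow k x = toZModPow k y ↔ (p : ℤ_[p]) ^ k ∣ x - y := by
  rw [← Ideal.mem_span_singleton, ← ker_toZModPow, RingHom.mem_ker, map_sub, sub_eq_zero]

theorem toZModPow_eq_iff_dist_le {k : ℕ} {x y : ℤ_[p]} :
    toZModPow k x = toZModPow k y ↔ dist x y ≤ (p : ℝ) ^ (-k : ℤ) := by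
  rw [toZModPow_eq_iff_pow_dvd_sub, ← Ideal.mem_span_singleton, ← norm_le_pow_iff_mem_span_pow,
    dist_eq_norm]

theorem dist_le_of_forall_toZModPow_eq {x y z w : ℤ_[p]}
    (h : ∀ k, toZModPow k x = toZModPow k y → toZModPow k z = toZModPow k w) :
    dist z w ≤ dist x y := by
  rcases eq_or_ne x y with rfl | hxy
  · rw [ext_of_toZModPow.mp fun k => h k rfl, dist_self, dist_self]
  · have hk : dist x y = (p : ℝ) ^ (-(x - y).valuation : ℤ) := by
      rw [dist_eq_norm, norm_eq_zpow_neg_valuation (sub_ne_zero.mpr hxy)]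
    rw [hk, ← toZModPow_eq_iff_dist_le]
    exact h _ (toZModPow_eq_iff_dist_le.mpr hk.le)

end PadicInt

theorem Finset.prod_univ_eq_of_sq_eq_one_iff {G : Type*} [CommGroup G] [Fintype G] {g : G}
    (h : ∀ x : G, x ^ 2 = 1 ↔ x = 1 ∨ x = g) : ∏ x : G, x = g := by
  classical
  have hg : g⁻¹ = g := inv_eq_of_mul_eq_one_left (by rw [← sq, h]; exact Or.inr rfl)
  have hrest : ∏ x ∈ univ.erase g, x = 1 := by
    refine prod_involution (fun x _ => x⁻¹) (fun x _ => mul_inv_cancel x) (fun x hx hx1 hinv => ?_)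
      (fun x hx => ?_) (fun x _ => inv_inv x)
    · rcases (h x).mp (by simpa [sq, hinv] using inv_mul_cancel x) with h1 | h1
      exacts [hx1 h1, ne_of_mem_erase hx h1]
    · refine mem_erase.mpr ⟨fun hxg => ne_of_mem_erase hx ?_, mem_univ _⟩
      rw [← inv_inv x, hxg, hg]
  rw [← insert_erase (mem_univ g), prod_insert (notMem_erase _ _), hrest, mul_one]

theorem ZMod.eq_one_or_eq_neg_one_of_sq_eq_one {p k : ℕ} (hp : p.Prime) (hp2 : p ≠ 2)
    {x : ZMod (p ^ k)} (hx : x ^ 2 = 1) : x = 1 ∨ x = -1 := by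
  obtain ⟨v, rfl⟩ := ZMod.intCast_surjective x
  have hpZ : Prime (p : ℤ) := Nat.prime_iff_prime_int.mp hp
  have hprod : (p : ℤ) ^ k ∣ (v - 1) * (v + 1) := by
    have h0 : (((v - 1) * (v + 1) : ℤ) : ZMod (p ^ k)) = 0 := by
      push_cast; linear_combination hx
    exact_mod_cast (ZMod.intCast_zmod_eq_zero_iff_dvd _ _).mp h0
  have hp2' : ¬ (p : ℤ) ∣ (v + 1) - (v - 1) := by
    rw [show (v + 1) - (v - 1) = ((2 : ℕ) : ℤ) by push_cast; ring, Int.natCast_dvd_natCast]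
    exact fun h => hp2 ((Nat.prime_dvd_prime_iff_eq hp Nat.prime_two).mp h)
  by_cases hv : (p : ℤ) ∣ v - 1
  · left
    have h := hpZ.pow_dvd_of_dvd_mul_right k (fun h => hp2' (dvd_sub h hv)) hprod
    have h0 : ((v - 1 : ℤ) : ZMod (p ^ k)) = 0 :=
      (ZMod.intCast_zmod_eq_zero_iff_dvd _ _).mpr (by exact_mod_cast h)
    push_cast at h0; linear_combination h0
  · right
    have h := hpZ.pow_dvd_of_dvd_mul_left k hv hprod
    have h0 : ((v + 1 : ℤ) : ZMod (p ^ k)) = 0 :=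
      (ZMod.intCast_zmod_eq_zero_iff_dvd _ _).mpr (by exact_mod_cast h)
    push_cast at h0; linear_combination h0

theorem ZMod.prod_units_prime_pow {p k : ℕ} [Fact p.Prime] (hp2 : p ≠ 2) :
    ∏ u : (ZMod (p ^ k))ˣ, u = -1 := by
  refine Finset.prod_univ_eq_of_sq_eq_one_iff fun u => ⟨fun hu => ?_, ?_⟩
  · rcases ZMod.eq_one_or_eq_neg_one_of_sq_eq_one (x := (u : ZMod (p ^ k))) Fact.out hp2
      (by rw [← Units.val_pow_eq_pow_val, hu, Units.val_one]) with h | h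
    exacts [Or.inl (Units.ext h), Or.inr (Units.ext (by rw [h, Units.val_neg, Units.val_one]))]
  · rintro (rfl | rfl) <;> simp

section pGammaNat

variable {p : ℕ} [hp : Fact p.Prime]

theorem pGammaNat_add (m d : ℕ) :
    pGammaNat p (m + d) = pGammaNat p m *
      ((-1) ^ d * ∏ j ∈ (Ico m (m + d)).filter (fun j => ¬ p ∣ j), (j : ℤ_[p])) := by
  simp only [pGammaNat, prod_filter, pow_add, ← prod_range_mul_prod_Ico _ (Nat.le_add_right m d)]
  ring

theorem prod_Ico_filter_not_dvd_eq_neg_one (hp2 : p ≠ 2) (k n : ℕ) :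
    ∏ j ∈ (Ico n (n + p ^ k)).filter (fun j => ¬ p ∣ j), (j : ZMod (p ^ k)) = -1 := by
  rcases Nat.eq_zero_or_pos k with rfl | hk
  · exact Subsingleton.elim (α := ZMod 1) _ _
  have hunit (j : ℕ) : IsUnit (j : ZMod (p ^ k)) ↔ ¬ p ∣ j :=
    ZMod.isUnit_natCast_iff_not_dvd_pow hp.out hk
  calc _ = ∏ u : (ZMod (p ^ k))ˣ, (u : ZMod (p ^ k)) := by
        refine prod_bij' (fun j hj => ((hunit j).mpr (mem_filter.mp hj).2).unit)
          (fun u _ => n + ((u : ZMod (p ^ k)) - n).val) (fun _ _ => mem_univ _)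
          (fun u _ => ?_) (fun j hj => ?_) (fun u _ => ?_) (fun j _ => rfl)
        · have hcast : ((n + ((u : ZMod (p ^ k)) - n).val : ℕ) : ZMod (p ^ k)) = u := by
            push_cast; rw [ZMod.natCast_zmod_val]; ring
          refine mem_filter.mpr ⟨mem_Ico.mpr ⟨by omega, Nat.add_lt_add_left (ZMod.val_lt _) n⟩,
            (hunit _).mp (by rw [hcast]; exact u.isUnit)⟩
        · obtain ⟨hnj, hjn⟩ := mem_Ico.mp (mem_filter.mp hj).1
          rw [IsUnit.unit_spec, ← Nat.cast_sub hnj, ZMod.val_natCast_of_lt (by omega)]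
          omega
        · ext
          rw [IsUnit.unit_spec]
          push_cast; rw [ZMod.natCast_zmod_val]; ring
    _ = -1 := by rw [← Units.coe_prod, ZMod.prod_units_prime_pow hp2, Units.val_neg, Units.val_one]

theorem toZModPow_pGammaNat_periodic (hp2 : p ≠ 2) (k : ℕ) :
    Function.Periodic (fun n => PadicInt.toZModPow k (pGammaNat p n)) (p ^ k) := fun n => by
  simp only [pGammaNat_add, map_mul, map_neg, map_one, map_prod, map_natCast,
    prod_Ico_filter_not_dvd_eq_neg_one hp2, (hp.out.odd_of_ne_two hp2).pow.neg_one_pow]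
  ring

theorem dist_pGammaNat_le (hp2 : p ≠ 2) (m n : ℕ) :
    dist (pGammaNat p m) (pGammaNat p n) ≤ dist (m : ℤ_[p]) n :=
  PadicInt.dist_le_of_forall_toZModPow_eq fun k hmn => by
    rw [map_natCast, map_natCast, ZMod.natCast_eq_natCast_iff'] at hmn
    have hper := toZModPow_pGammaNat_periodic (p := p) hp2 k
    exact (hper.map_mod_nat m).symm.trans (hmn ▸ hper.map_mod_nat n)

end pGammaNat

theorem toZModPow_pGamma {p : ℕ} [Fact p.Prime] (hp2 : p ≠ 2) {k : ℕ} {x : ℤ_[p]} {n : ℕ}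
    (h : PadicInt.toZModPow k x = n) :
    PadicInt.toZModPow k (pGamma p x) = PadicInt.toZModPow k (pGammaNat p n) := by
  rw [← map_natCast (PadicInt.toZModPow k), PadicInt.toZModPow_eq_iff_dist_le] at h
  exact PadicInt.toZModPow_eq_iff_dist_le.mpr <|
    (dist_limUnder_comap_le PadicInt.denseRange_natCast (dist_pGammaNat_le hp2) x n).trans h

theorem Finset.prod_one_add_mul_of_sq_eq_zero {ι R : Type*} [CommSemiring R] (s : Finset ι)
    (y : ι → R) {c : R} (hc : c ^ 2 = 0) :
    ∏ i ∈ s, (1 + c * y i) = 1 + c * ∑ i ∈ s, y i := by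
  classical
  induction s using Finset.induction_on with
  | empty => simp
  | insert j s hj ih =>
    rw [prod_insert hj, sum_insert hj, ih]
    calc (1 + c * y j) * (1 + c * ∑ i ∈ s, y i)
        = 1 + c * (y j + ∑ i ∈ s, y i) + c ^ 2 * (y j * ∑ i ∈ s, y i) := by ring
      _ = 1 + c * (y j + ∑ i ∈ s, y i) := by rw [hc, zero_mul, add_zero]

theorem Finset.prod_add_eq_prod_of_involution {ι R : Type*} [CommRing R] {s : Finset ι}
    {x : ι → R} (σ : ι → ι) (hσ : ∀ i ∈ s, σ i ∈ s) (hσσ : ∀ i ∈ s, σ (σ i) = i)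
    (hx : ∀ i ∈ s, x (σ i) = -x i) (hxu : ∀ i ∈ s, IsUnit (x i)) (h2 : IsUnit (2 : R))
    {c : R} (hc : c ^ 2 = 0) :
    ∏ i ∈ s, (x i + c) = ∏ i ∈ s, x i := by
  have hinv : ∑ i ∈ s, Ring.inverse (x i) = 0 := by
    have hneg : ∑ i ∈ s, Ring.inverse (x i) = ∑ i ∈ s, -Ring.inverse (x i) := by
      refine sum_nbij' σ σ hσ hσ hσσ hσσ fun i hi => ?_
      obtain ⟨u, hu⟩ := hxu i hi
      rw [hx i hi, ← hu, ← Units.val_neg, Ring.inverse_unit, Ring.inverse_unit, inv_neg,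
        Units.val_neg, neg_neg]
    rw [sum_neg_distrib] at hneg
    exact (h2.mul_right_eq_zero).mp (by linear_combination hneg)
  calc ∏ i ∈ s, (x i + c) = ∏ i ∈ s, x i * (1 + c * Ring.inverse (x i)) :=
        prod_congr rfl fun i hi => by
          rw [mul_add, mul_one, mul_left_comm, Ring.mul_inverse_cancel _ (hxu i hi), mul_one]
    _ = ∏ i ∈ s, x i := by
        rw [prod_mul_distrib, prod_one_add_mul_of_sq_eq_zero _ _ hc, hinv, mul_zero, add_zero,
          mul_one]

theorem prod_Ico_add_filter_not_dvd {M : Type*} [CommMonoid M] (f : ℕ → M) {p c : ℕ}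
    (hc : p ∣ c) (m n : ℕ) :
    ∏ j ∈ (Ico (m + c) (n + c)).filter (fun j => ¬ p ∣ j), f j =
      ∏ j ∈ (Ico m n).filter (fun j => ¬ p ∣ j), f (j + c) := by
  rw [prod_filter, prod_filter, ← prod_Ico_add']
  exact prod_congr rfl fun j _ => by simp only [Nat.dvd_add_left hc]

theorem toZModPow_two_pGammaNat_add_mul_pGammaNat {p : ℕ} [hp : Fact p.Prime] (hp2 : p ≠ 2)
    {a b c : ℕ} (hba : b ≤ a) (hab : ((a + b : ℕ) : ZMod (p ^ 2)) = 1) (hc : p ∣ c) :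
    PadicInt.toZModPow 2 (pGammaNat p (b + c) * pGammaNat p a) =
      PadicInt.toZModPow 2 (pGammaNat p (a + c) * pGammaNat p b) := by
  obtain ⟨d, rfl⟩ := Nat.exists_eq_add_of_le hba
  have hunit (j : ℕ) : IsUnit (j : ZMod (p ^ 2)) ↔ ¬ p ∣ j :=
    ZMod.isUnit_natCast_iff_not_dvd_pow hp.out two_pos
  have hrefl : ∀ j ∈ Ico b (b + d), ((2 * b + d - 1 - j : ℕ) : ZMod (p ^ 2)) = -j := by
    intro j hj
    have hsum : ((2 * b + d - 1 - j : ℕ) : ZMod (p ^ 2)) + j + 1 =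
        ((b + d + b : ℕ) : ZMod (p ^ 2)) := by
      rw [← Nat.cast_add, ← Nat.cast_add_one]; congr 1; have := mem_Ico.mp hj; omega
    linear_combination hsum + hab
  have hshift : ∏ j ∈ (Ico b (b + d)).filter (fun j => ¬ p ∣ j), ((j : ZMod (p ^ 2)) + c) =
      ∏ j ∈ (Ico b (b + d)).filter (fun j => ¬ p ∣ j), (j : ZMod (p ^ 2)) := by
    refine prod_add_eq_prod_of_involution (fun j => 2 * b + d - 1 - j) (fun j hj => ?_)
      (fun j hj => ?_) (fun j hj => hrefl j (mem_filter.mp hj).1)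
      (fun j hj => (hunit j).mpr (mem_filter.mp hj).2) ?_ ?_
    · obtain ⟨hjI, hjp⟩ := mem_filter.mp hj
      refine mem_filter.mpr ⟨mem_Ico.mpr (by have := mem_Ico.mp hjI; omega), ?_⟩
      rw [← hunit, hrefl j hjI, IsUnit.neg_iff, hunit]
      exact hjp
    · have := mem_Ico.mp (mem_filter.mp hj).1
      omega
    · exact_mod_cast (hunit 2).mpr fun h =>
        hp2 ((Nat.prime_dvd_prime_iff_eq hp.out Nat.prime_two).mp h)
    · rw [← Nat.cast_pow, ZMod.natCast_eq_zero_iff]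
      exact pow_dvd_pow_of_dvd hc 2
  rw [show b + d + c = b + c + d by ring, pGammaNat_add b d, pGammaNat_add (b + c) d,
    show b + c + d = b + d + c by ring, prod_Ico_add_filter_not_dvd _ hc]
  simp only [map_mul, map_prod, Nat.cast_add, map_add, map_natCast, hshift]
  ring

theorem pGamma_shift_congr (p : ℕ) [Fact p.Prime] (h4 : p % 4 = 3)
    (q half : ℤ_[p]) (hq : 4 * q = 1) (hhalf : 2 * half = 1) :
    (p : ℤ_[p]) ^ 2 ∣
      (pGamma p (3 * q + (p : ℤ_[p]) * half) * pGamma p q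
        - pGamma p (q + (p : ℤ_[p]) * half) * pGamma p (3 * q)) := by
  have hp2 : p ≠ 2 := by omega
  obtain ⟨m, hm⟩ : ∃ m, p = 2 * m + 1 := ⟨p / 2, by omega⟩
  set φ := PadicInt.toZModPow (p := p) 2
  have hP : (p : ZMod (p ^ 2)) = 2 * m + 1 := by exact_mod_cast congrArg Nat.cast hm
  have hP2 : (2 * (m : ZMod (p ^ 2)) + 1) ^ 2 = 0 := by
    rw [← hP, ← Nat.cast_pow, ZMod.natCast_self]
  have hφq : 4 * φ q = 1 := by simpa [map_ofNat] using congrArg φ hq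
  have hφhalf : 2 * φ half = 1 := by simpa [map_ofNat] using congrArg φ hhalf
  have h4u : IsUnit (4 : ZMod (p ^ 2)) :=
    IsUnit.of_mul_eq_one (-(m ^ 2 + m)) (by linear_combination -hP2)
  have hΓ (x : ℤ_[p]) (n : ℕ) (h : 4 * φ x = 4 * n) : φ (pGamma p x) = φ (pGammaNat p n) :=
    toZModPow_pGamma hp2 (h4u.mul_left_cancel h)
  -- `a = (3p² + 1)/4`, `b = (p² + 3)/4`, `c = p(p + 1)/2`, in terms of `m = (p - 1)/2`
  rw [← PadicInt.toZModPow_eq_iff_pow_dvd_sub, map_mul, map_mul,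
    hΓ _ (m ^ 2 + m + 1 + (2 * m + 1) * (m + 1)) (by
      simp only [map_add, map_mul, map_natCast, map_ofNat, hP]; push_cast
      linear_combination 3 * hφq + 2 * (2 * (m : ZMod (p ^ 2)) + 1) * hφhalf - 3 * hP2),
    hΓ q (3 * m ^ 2 + 3 * m + 1) (by push_cast; linear_combination hφq - 3 * hP2),
    hΓ _ (3 * m ^ 2 + 3 * m + 1 + (2 * m + 1) * (m + 1)) (by
      simp only [map_add, map_mul, map_natCast, hP]; push_cast
      linear_combination hφq + 2 * (2 * (m : ZMod (p ^ 2)) + 1) * hφhalf - 5 * hP2),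
    hΓ _ (m ^ 2 + m + 1) (by
      simp only [map_mul, map_ofNat]; push_cast; linear_combination 3 * hφq - hP2),
    ← map_mul, ← map_mul]
  exact toZModPow_two_pGammaNat_add_mul_pGammaNat hp2 (by nlinarith)
    (by push_cast; linear_combination hP2) (by rw [hm]; exact dvd_mul_right _ _)
end

section
/- Let p be a prime with p ≡ 3 (mod 4) and n ≥ 2. Then, as elements of ℚ_p, ∏_{k=1}^{(p^{2n}-1)/2} (4k-1)/(4k+1) = [∏_{k=1}^{(p^{2n-2}-1)/2} (4k-1)/(4k+1)] · [Γ_p((2p^{2n-1}+3)/4)/Γ_p((2p^{2n-1}+1)/4)] · [Γ_p((2p^{2n}+1)/4)/Γ_p((2p^{2n}+3)/4)]. -/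
/-!
Since `Γ_p(x + 1) = -x Γ_p(x)` for a unit `x` and `-Γ_p(x)` otherwise, for `r = 3, 5` and
`K = (p^m - 1)/2` the quotient `Γ_p(r/4 + K) / Γ_p(r/4)` is, up to sign and powers of `1/4`, the
product of those `4k + r` (`k < K`) that are prime to `p`. As `p ≡ 3 (mod 4)`, the multiples of `p`
among the `4k + 3` are the `p(4l + 1)` and those among the `4k + 5` are the `p(4l + 3)`: products
of the same shape at level `p^(m-1)`. This expresses the product at level `p^m` times the one at
level `p^(m-1)` through values of `Γ_p`, and dividing the instances `m = 2n` and `m = 2n - 1`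
gives the claim.

That `Γ_p` is the limit of `pGammaNat` at all, with `‖Γ_p‖ = 1`, comes from Morita's congruence
`Γ_p(m + p^N) ≡ Γ_p(m) (mod p^N)`, i.e. from Gauss's generalisation of Wilson's theorem: the units
of `ℤ/p^N` multiply to `-1`.
-/

open Finset Filter

theorem prod_univ_units_eq_neg_one {R : Type*} [CommRing R] [Fintype Rˣ]
    (h : ∀ u : Rˣ, u⁻¹ = u → u = 1 ∨ u = -1) : ∏ u : Rˣ, u = -1 := by
  classical
  have : ∏ u ∈ (univ : Finset Rˣ).erase (-1), u = 1 :=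
    prod_involution (fun u _ => u⁻¹) (by simp)
      (fun u _ _ hinv => by rcases h u hinv with rfl | rfl <;> simp_all)
      (fun u hu => by simpa [inv_eq_iff_eq_inv] using hu) (by simp)
  rw [← insert_erase (mem_univ (-1 : Rˣ)), prod_insert (notMem_erase _ _), this, mul_one]

theorem ZMod.eq_one_or_eq_neg_one_of_mul_self_eq_one {p : ℕ} (hp : p.Prime) (hp2 : p ≠ 2)
    (N : ℕ) {x : ZMod (p ^ N)} (hx : x * x = 1) : x = 1 ∨ x = -1 := by
  obtain ⟨a, rfl⟩ := ZMod.intCast_surjective x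
  have hpZ : Prime (p : ℤ) := Nat.prime_iff_prime_int.mp hp
  have hdvd : (p : ℤ) ^ N ∣ (a - 1) * (a + 1) := by
    rw [← Nat.cast_pow, ← ZMod.intCast_zmod_eq_zero_iff_dvd]
    push_cast
    linear_combination hx
  have hnot : ¬ ((p : ℤ) ∣ a - 1 ∧ (p : ℤ) ∣ a + 1) := fun ⟨h1, h2⟩ => by
    have h2 : (p : ℤ) ∣ 2 := by simpa using dvd_sub h2 h1
    have := Int.le_of_dvd two_pos h2
    have := hp.two_le
    omega
  rw [← sub_eq_zero, ← sub_eq_zero (b := -1)]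
  by_cases hpa : (p : ℤ) ∣ a + 1
  · right
    have := hpZ.pow_dvd_of_dvd_mul_left N (fun h => hnot ⟨h, hpa⟩) hdvd
    exact_mod_cast (ZMod.intCast_zmod_eq_zero_iff_dvd _ _).mpr (by exact_mod_cast this)
  · left
    have := hpZ.pow_dvd_of_dvd_mul_right N hpa hdvd
    exact_mod_cast (ZMod.intCast_zmod_eq_zero_iff_dvd _ _).mpr (by exact_mod_cast this)

theorem ZMod.prod_range_filter_not_dvd_prime_pow {p : ℕ} (hp : p.Prime) (hp2 : p ≠ 2) (N : ℕ) :
    ∏ k ∈ range (p ^ N) with ¬ p ∣ k, (k : ZMod (p ^ N)) = -1 := by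
  rcases N.eq_zero_or_pos with rfl | hN
  · exact @Subsingleton.elim (ZMod 1) _ _ _
  have : NeZero (p ^ N) := ⟨pow_ne_zero _ hp.ne_zero⟩
  have hcop : ∀ k, ¬ p ∣ k ↔ k.Coprime (p ^ N) := fun k => by
    rw [Nat.coprime_pow_right_iff hN, Nat.coprime_comm, hp.coprime_iff_not_dvd]
  have hunits : ∏ u : (ZMod (p ^ N))ˣ, u = -1 := prod_univ_units_eq_neg_one fun u hu => by
    have hsq : (u : ZMod (p ^ N)) * u = 1 := by
      nth_rewrite 1 [← hu]; rw [← Units.val_mul, inv_mul_cancel, Units.val_one]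
    rcases ZMod.eq_one_or_eq_neg_one_of_mul_self_eq_one hp hp2 N hsq with h | h
    · exact .inl (Units.ext h)
    · exact .inr (Units.ext h)
  rw [← Units.val_one, ← Units.val_neg, ← hunits, Units.coe_prod]
  refine prod_bij' (fun k hk => ZMod.unitOfCoprime k ((hcop k).mp (mem_filter.mp hk).2))
    (fun u _ => (u : ZMod (p ^ N)).val) (by simp) (fun u _ => ?_) (fun k hk => ?_)
    (fun u _ => by ext; simp) (fun k _ => by simp)
  · simpa [ZMod.val_lt, hcop] using ZMod.val_coe_unit_coprime u
  · simp only [mem_filter, mem_range] at hk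
    simp [ZMod.val_cast_of_lt hk.1]

section pGammaNat

variable {p : ℕ} [Fact p.Prime]

theorem pGammaNat_zero : pGammaNat p 0 = 1 := by
  simp [pGammaNat]

theorem pGammaNat_succ (t : ℕ) :
    pGammaNat p (t + 1) = -(if p ∣ t then 1 else (t : ℤ_[p])) * pGammaNat p t := by
  unfold pGammaNat
  rw [range_add_one, filter_insert]
  split_ifs with h <;> simp [pow_succ, h]
  ring

theorem norm_pGammaNat (t : ℕ) : ‖pGammaNat p t‖ = 1 := by
  induction t with
  | zero => simp [pGammaNat_zero]
  | succ t ih =>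
    rw [pGammaNat_succ, norm_mul, ih, norm_neg]
    split_ifs with h
    · simp
    · simpa [PadicInt.norm_natCast_eq_one_iff, Nat.Prime.coprime_iff_not_dvd Fact.out] using h

theorem toZModPow_pGammaNat_prime_pow (hp2 : p ≠ 2) (N : ℕ) :
    PadicInt.toZModPow N (pGammaNat p (p ^ N)) = 1 := by
  have hodd : Odd (p ^ N) := ((Fact.out : p.Prime).odd_of_ne_two hp2).pow
  simp only [pGammaNat, map_mul, map_neg, map_one, map_prod, map_natCast,
    hodd.neg_one_pow, ZMod.prod_range_filter_not_dvd_prime_pow Fact.out hp2 N]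
  ring

theorem toZModPow_pGammaNat_add_prime_pow (hp2 : p ≠ 2) (N m : ℕ) :
    PadicInt.toZModPow N (pGammaNat p (m + p ^ N)) = PadicInt.toZModPow N (pGammaNat p m) := by
  rcases N.eq_zero_or_pos with rfl | hN
  · exact @Subsingleton.elim (ZMod 1) _ _ _
  induction m with
  | zero => rw [zero_add, toZModPow_pGammaNat_prime_pow hp2, pGammaNat_zero, map_one]
  | succ m ih =>
    rw [add_right_comm, pGammaNat_succ, pGammaNat_succ, map_mul, map_mul, ih]
    have hdvd : p ∣ m + p ^ N ↔ p ∣ m := Nat.dvd_add_left (dvd_pow_self p hN.ne')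
    simp only [hdvd]
    have hpN : (p : ZMod (p ^ N)) ^ N = 0 := by exact_mod_cast ZMod.natCast_self (p ^ N)
    split_ifs <;> simp [hpN]

theorem toZModPow_pGammaNat_eq_of_modEq (hp2 : p ≠ 2) {N a b : ℕ} (h : a ≡ b [MOD p ^ N]) :
    PadicInt.toZModPow N (pGammaNat p a) = PadicInt.toZModPow N (pGammaNat p b) := by
  have hperiodic : ∀ a c, PadicInt.toZModPow N (pGammaNat p (a + p ^ N * c)) =
      PadicInt.toZModPow N (pGammaNat p a) := fun a c => by
    induction c with
    | zero => simp
    | succ c ih => rw [mul_add_one, ← add_assoc, toZModPow_pGammaNat_add_prime_pow hp2, ih]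
  rcases le_total a b with hab | hba
  · obtain ⟨c, hc⟩ := (Nat.modEq_iff_dvd' hab).mp h
    rw [← Nat.add_sub_cancel' hab, hc, hperiodic]
  · obtain ⟨c, hc⟩ := (Nat.modEq_iff_dvd' hba).mp h.symm
    rw [← Nat.add_sub_cancel' hba, hc, hperiodic]

theorem norm_pGammaNat_sub_le (hp2 : p ≠ 2) {N a b : ℕ}
    (h : ‖(a : ℤ_[p]) - b‖ ≤ (p : ℝ) ^ (-(N : ℤ))) :
    ‖pGammaNat p a - pGammaNat p b‖ ≤ (p : ℝ) ^ (-(N : ℤ)) := by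
  simp only [PadicInt.norm_le_pow_iff_mem_span_pow, ← PadicInt.ker_toZModPow, RingHom.mem_ker,
    map_sub, sub_eq_zero, map_natCast, ZMod.natCast_eq_natCast_iff] at h ⊢
  exact toZModPow_pGammaNat_eq_of_modEq hp2 h

end pGammaNat

open Topology Metric

section pGamma

variable {p : ℕ} [Fact p.Prime]

instance comap_natCast_nhds_neBot (x : ℤ_[p]) :
    (comap (Nat.cast : ℕ → ℤ_[p]) (𝓝 x)).NeBot :=
  comap_neBot fun _ ht => PadicInt.denseRange_natCast.mem_nhds ht

theorem tendsto_pGammaNat (hp2 : p ≠ 2) (x : ℤ_[p]) :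
    Tendsto (pGammaNat p) (comap Nat.cast (𝓝 x)) (𝓝 (pGamma p x)) := by
  refine tendsto_nhds_limUnder (CompleteSpace.complete ?_)
  refine Metric.cauchy_iff.mpr ⟨inferInstance, fun ε hε => ?_⟩
  obtain ⟨N, hN⟩ := PadicInt.exists_pow_neg_lt p hε
  have hr : (0 : ℝ) < (p : ℝ) ^ (-(N : ℤ)) := zpow_pos (Nat.cast_pos.mpr (Fact.out : p.Prime).pos) _
  refine ⟨pGammaNat p '' (Nat.cast ⁻¹' closedBall x ((p : ℝ) ^ (-(N : ℤ)))),
    image_mem_map (preimage_mem_comap (closedBall_mem_nhds x hr)), ?_⟩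
  rintro _ ⟨a, ha, rfl⟩ _ ⟨b, hb, rfl⟩
  rw [dist_eq_norm]
  refine (norm_pGammaNat_sub_le hp2 ?_).trans_lt hN
  rw [← dist_eq_norm]
  exact (dist_triangle_max _ x _).trans (max_le ha (by rwa [dist_comm]))

theorem norm_pGamma (hp2 : p ≠ 2) (x : ℤ_[p]) : ‖pGamma p x‖ = 1 :=
  (isClosed_eq continuous_norm continuous_const).mem_of_tendsto (tendsto_pGammaNat hp2 x)
    (Eventually.of_forall norm_pGammaNat)

theorem pGamma_add_one (hp2 : p ≠ 2) (x : ℤ_[p]) :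
    pGamma p (x + 1) = -(if ‖x‖ < 1 then 1 else x) * pGamma p x := by
  set g : ℤ_[p] → ℤ_[p] := fun y => if ‖y‖ < 1 then 1 else y
  -- `g` is continuous because the open unit ball of `ℤ_[p]` is clopen.
  have hg : Continuous g := by
    refine continuous_const.if (fun y hy => ?_) continuous_id
    rw [show {y : ℤ_[p] | ‖y‖ < 1} = ball 0 1 by ext; simp,
      IsUltrametricDist.frontier_ball_eq_empty] at hy
    exact absurd hy (Set.notMem_empty y)
  have hshift : Tendsto (· + 1) (comap Nat.cast (𝓝 x)) (comap Nat.cast (𝓝 (x + 1))) :=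
    tendsto_comap_iff.mpr (by simpa [Function.comp_def] using tendsto_comap.add_const 1)
  refine tendsto_nhds_unique ((tendsto_pGammaNat hp2 (x + 1)).comp hshift) ?_
  have hsucc : pGammaNat p ∘ (· + 1) = fun t : ℕ => -g t * pGammaNat p t :=
    funext fun t => by simp [g, pGammaNat_succ]
  rw [hsucc]
  exact ((hg.tendsto x).comp tendsto_comap).neg.mul (tendsto_pGammaNat hp2 x)

theorem pGamma_add_nat (hp2 : p ≠ 2) (x : ℤ_[p]) (K : ℕ) :
    (-1) ^ K * pGamma p (x + K) * ∏ k ∈ range K with ‖x + ((k : ℕ) : ℤ_[p])‖ < 1, (x + k) =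
      pGamma p x * ∏ k ∈ range K, (x + k) := by
  induction K with
  | zero => simp
  | succ K ih =>
    rw [prod_filter] at ih ⊢
    rw [prod_range_succ, prod_range_succ, Nat.cast_succ, ← add_assoc, pGamma_add_one hp2,
      ← mul_assoc (pGamma p x), ← ih]
    split_ifs <;> ring

end pGamma

theorem prod_filter_dvd_four_mul_add {M : Type*} [CommMonoid M] (f : ℕ → M) {p a c K L : ℕ}
    (hp : 0 < p) (hc : c < 4) (hres : ∀ i, p * i % 4 = a % 4 ↔ i % 4 = c) (hle : a ≤ p * c)
    (hlt : ∀ l, p * (4 * l + c) < 4 * K + a ↔ l < L) :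
    ∏ k ∈ range K with p ∣ 4 * k + a, f (4 * k + a) = ∏ l ∈ range L, f (p * (4 * l + c)) := by
  have hmem : ∀ k ∈ {k ∈ range K | p ∣ 4 * k + a}, p * (4 * ((4 * k + a) / p / 4) + c) = 4 * k + a ∧
      (4 * k + a) / p / 4 < L := fun k hk => by
    obtain ⟨hk, i, hi⟩ := by simpa only [mem_filter, mem_range] using hk
    have hic : i % 4 = c := (hres i).mp (by omega)
    rw [hi, Nat.mul_div_cancel_left i hp, show 4 * (i / 4) + c = i by omega]
    exact ⟨rfl, (hlt _).mp (by rw [show 4 * (i / 4) + c = i by omega]; omega)⟩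
  have hmem' : ∀ l ∈ range L, 4 * ((p * (4 * l + c) - a) / 4) + a = p * (4 * l + c) ∧
      (p * (4 * l + c) - a) / 4 < K := fun l hl => by
    have h4 : p * (4 * l + c) % 4 = a % 4 := (hres _).mpr (by omega)
    have hge : p * c ≤ p * (4 * l + c) := Nat.mul_le_mul_left p (by omega)
    have := (hlt l).mpr (mem_range.mp hl)
    omega
  refine prod_nbij' (fun k => (4 * k + a) / p / 4) (fun l => (p * (4 * l + c) - a) / 4)
    (fun k hk => mem_range.mpr (hmem k hk).2) (fun l hl => ?_) (fun k hk => ?_) (fun l hl => ?_)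
    (fun k hk => by rw [(hmem k hk).1])
  · simp only [mem_filter, mem_range, (hmem' l hl).1]
    exact ⟨(hmem' l hl).2, dvd_mul_right p _⟩
  · have := (hmem k hk).1
    omega
  · simp only [(hmem' l hl).1, Nat.mul_div_cancel_left _ hp]
    omega

theorem Nat.mul_lt_mul_add_iff_le {p a X Y : ℕ} (ha : 0 < a) (hap : a ≤ p) :
    p * X < p * Y + a ↔ X ≤ Y :=
  ⟨fun h => by by_contra! h'; nlinarith, fun h => by nlinarith⟩

theorem prod_natCast_mul {ι R : Type*} [CommSemiring R] (s : Finset ι) (f : ι → ℕ) (q : R) :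
    ∏ i ∈ s, ((f i : R) * q) = q ^ #s * ((∏ i ∈ s, f i : ℕ) : R) := by
  rw [prod_mul_distrib, prod_const, Nat.cast_prod, mul_comm]

section quarters

variable {p : ℕ} [Fact p.Prime]

theorem pGamma_natCast_mul_add_nat (hp2 : p ≠ 2) {q : ℤ_[p]} (hq : 4 * q = 1) (r K : ℕ) :
    (-1) ^ K * pGamma p (r * q + K) * ∏ k ∈ range K with p ∣ 4 * k + r, ((4 * k + r : ℕ) * q) =
      pGamma p (r * q) * ∏ k ∈ range K, ((4 * k + r : ℕ) * q) := by
  have hx : ∀ k : ℕ, (r : ℤ_[p]) * q + k = ((4 * k + r : ℕ) : ℤ_[p]) * q := fun k => by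
    push_cast
    linear_combination (-(k : ℤ_[p])) * hq
  have hq1 : ‖q‖ = 1 := PadicInt.isUnit_iff.mp (.of_mul_eq_one_right 4 hq)
  have h := pGamma_add_nat hp2 (r * q) K
  rw [filter_congr fun k _ => by
    rw [hx, norm_mul, hq1, mul_one, PadicInt.norm_natCast_lt_one_iff]] at h
  simpa only [hx] using h

theorem pGamma_three_quarters_add_nat (h4 : p % 4 = 3) {q : ℤ_[p]} (hq : 4 * q = 1) {K K' : ℕ}
    (hK : 4 * K + 2 = p * (4 * K' + 2)) :
    (-1) ^ K * pGamma p (3 * q + K) *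
        ((p * q) ^ (K' + 1) * ((∏ l ∈ range K', (4 * l + 5) : ℕ) : ℤ_[p])) =
      pGamma p (3 * q) * (q ^ K * ((∏ k ∈ range K, (4 * k + 3) : ℕ) : ℤ_[p])) := by
  have hp : 0 < p := (Fact.out : p.Prime).pos
  have hlt : ∀ l, p * (4 * l + 1) < 4 * K + 3 ↔ l < K' + 1 := fun l => by
    have := Nat.mul_lt_mul_add_iff_le (X := 4 * l + 1) (Y := 4 * K' + 2) one_pos hp
    omega
  have h := pGamma_natCast_mul_add_nat (by omega) hq 3 K
  rw [prod_filter_dvd_four_mul_add (fun n : ℕ => (n : ℤ_[p]) * q) hp (by omega)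
    (fun i => by rw [Nat.mul_mod, h4]; omega) (by omega) hlt] at h
  have hmult : ∏ l ∈ range (K' + 1), p * (4 * l + 1) =
      p ^ (K' + 1) * ∏ l ∈ range K', (4 * l + 5) := by
    rw [prod_mul_distrib, prod_const, card_range, prod_range_succ']
    simp [mul_add]
  rw [prod_natCast_mul _ (fun l => p * (4 * l + 1)), prod_natCast_mul _ (fun k => 4 * k + 3),
    card_range, card_range, hmult, Nat.cast_ofNat, Nat.cast_mul, Nat.cast_pow] at h
  linear_combination h

theorem pGamma_five_quarters_add_nat (h4 : p % 4 = 3) {q : ℤ_[p]} (hq : 4 * q = 1) {K K' : ℕ}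
    (hK : 4 * K + 2 = p * (4 * K' + 2)) :
    (-1) ^ K * pGamma p (5 * q + K) *
        ((p * q) ^ K' * ((∏ l ∈ range K', (4 * l + 3) : ℕ) : ℤ_[p])) =
      pGamma p (5 * q) * (q ^ K * ((∏ k ∈ range K, (4 * k + 5) : ℕ) : ℤ_[p])) := by
  have hp : 0 < p := (Fact.out : p.Prime).pos
  have hlt : ∀ l, p * (4 * l + 3) < 4 * K + 5 ↔ l < K' := fun l => by
    have := Nat.mul_lt_mul_add_iff_le (X := 4 * l + 3) (Y := 4 * K' + 2) three_pos
      (show 3 ≤ p by have := (Fact.out : p.Prime).two_le; omega)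
    omega
  have h := pGamma_natCast_mul_add_nat (by omega) hq 5 K
  rw [prod_filter_dvd_four_mul_add (fun n : ℕ => (n : ℤ_[p]) * q) hp (by omega)
    (fun i => by rw [Nat.mul_mod, h4]; omega) (by omega) hlt] at h
  rw [prod_natCast_mul _ (fun l => p * (4 * l + 3)), prod_natCast_mul _ (fun k => 4 * k + 5),
    card_range, card_range, prod_mul_distrib, prod_const, card_range, Nat.cast_ofNat,
    Nat.cast_mul, Nat.cast_pow] at h
  linear_combination h

theorem prod_mul_pGamma_three_quarters (h4 : p % 4 = 3) {q : ℤ_[p]} (hq : 4 * q = 1) {K K' : ℕ}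
    (hK : 2 * K + 1 = p * (2 * K' + 1)) :
    ((∏ k ∈ range K, (4 * k + 3) : ℕ) : ℤ_[p]) * ((∏ k ∈ range K', (4 * k + 3) : ℕ) : ℤ_[p]) *
        (pGamma p (3 * q) * pGamma p (5 * q + K)) =
      p * q * (pGamma p (3 * q + K) * pGamma p (5 * q)) *
        ((∏ k ∈ range K, (4 * k + 5) : ℕ) : ℤ_[p]) *
        ((∏ k ∈ range K', (4 * k + 5) : ℕ) : ℤ_[p]) := by
  have hK4 : 4 * K + 2 = p * (4 * K' + 2) := by linear_combination 2 * hK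
  have h3 := pGamma_three_quarters_add_nat h4 hq hK4
  have h5 := pGamma_five_quarters_add_nat h4 hq hK4
  have hq0 : q ≠ 0 := by rintro rfl; simp at hq
  refine mul_left_cancel₀ (pow_ne_zero K hq0) ?_
  linear_combination (-(((∏ k ∈ range K', (4 * k + 3) : ℕ) : ℤ_[p]) * pGamma p (5 * q + K))) * h3
    + (p * q * pGamma p (3 * q + K) * ((∏ k ∈ range K', (4 * k + 5) : ℕ) : ℤ_[p])) * h5

end quarters

section guoProd

variable {p : ℕ} [Fact p.Prime]

noncomputable def guoProd (p : ℕ) [Fact p.Prime] (K : ℕ) : ℚ_[p] :=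
  ∏ k ∈ Icc 1 K, ((4 * (k : ℚ_[p]) - 1) / (4 * (k : ℚ_[p]) + 1))

theorem guoProd_eq_div (K : ℕ) :
    guoProd p K = ((∏ k ∈ range K, (4 * k + 3) : ℕ) : ℚ_[p]) /
      ((∏ k ∈ range K, (4 * k + 5) : ℕ) : ℚ_[p]) := by
  rw [guoProd, ← Finset.Ico_add_one_right_eq_Icc, prod_Ico_eq_prod_range]
  push_cast
  rw [← prod_div_distrib]
  refine prod_congr (by simp) fun k _ => ?_
  ring

theorem guoProd_ne_zero (K : ℕ) : guoProd p K ≠ 0 := by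
  rw [guoProd_eq_div]
  exact div_ne_zero (Nat.cast_ne_zero.mpr (prod_ne_zero_iff.mpr fun k _ => by omega))
    (Nat.cast_ne_zero.mpr (prod_ne_zero_iff.mpr fun k _ => by omega))

theorem guoProd_mul_guoProd_pred (h4 : p % 4 = 3) {m : ℕ} (hm : 1 ≤ m) {q half : ℤ_[p]}
    (hq : 4 * q = 1) (hhalf : 2 * half = 1) :
    guoProd p ((p ^ m - 1) / 2) * guoProd p ((p ^ (m - 1) - 1) / 2) *
        ((pGamma p (3 * q) : ℚ_[p]) * (pGamma p (3 * q + (p : ℤ_[p]) ^ m * half) : ℚ_[p])) =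
      p * q * ((pGamma p (q + (p : ℤ_[p]) ^ m * half) : ℚ_[p]) * (pGamma p (5 * q) : ℚ_[p])) := by
  have hodd : ∀ j, p ^ j % 2 = 1 := fun j =>
    Nat.odd_iff.mp (Nat.odd_iff.mpr (by omega : p % 2 = 1)).pow
  have hpow : p ^ m = p * p ^ (m - 1) := by rw [← pow_succ', Nat.sub_add_cancel hm]
  set K := (p ^ m - 1) / 2
  have hK : 2 * K + 1 = p * (2 * ((p ^ (m - 1) - 1) / 2) + 1) := by
    rw [show 2 * ((p ^ (m - 1) - 1) / 2) + 1 = p ^ (m - 1) by have := hodd (m - 1); omega, ← hpow]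
    have := hodd m; omega
  have hKcast : 2 * (K : ℤ_[p]) + 1 = (p : ℤ_[p]) ^ m := by
    exact_mod_cast (show 2 * K + 1 = p ^ m by have := hodd m; omega)
  have harg3 : 3 * q + K = q + (p : ℤ_[p]) ^ m * half := mul_left_cancel₀ (two_ne_zero' ℤ_[p])
    (by linear_combination hq + hKcast - (p : ℤ_[p]) ^ m * hhalf)
  have harg5 : 5 * q + K = 3 * q + (p : ℤ_[p]) ^ m * half := mul_left_cancel₀ (two_ne_zero' ℤ_[p])
    (by linear_combination hq + hKcast - (p : ℤ_[p]) ^ m * hhalf)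
  have h := congrArg ((↑) : ℤ_[p] → ℚ_[p]) (prod_mul_pGamma_three_quarters h4 hq hK)
  rw [harg3, harg5] at h
  simp only [PadicInt.coe_mul, PadicInt.coe_natCast] at h
  rw [guoProd_eq_div, guoProd_eq_div, div_mul_div_comm, div_mul_eq_mul_div, div_eq_iff
    (by rw [← Nat.cast_mul, Nat.cast_ne_zero]; exact mul_ne_zero
          (prod_ne_zero_iff.mpr fun k _ => by omega) (prod_ne_zero_iff.mpr fun k _ => by omega))]
  linear_combination h

end guoProd

theorem induction_step (p n : ℕ) [Fact p.Prime] (h4 : p % 4 = 3) (hn : 2 ≤ n)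
    (q half : ℤ_[p]) (hq : 4 * q = 1) (hhalf : 2 * half = 1) :
    (∏ k ∈ Finset.Icc 1 ((p ^ (2 * n) - 1) / 2),
        ((4 * (k : ℚ_[p]) - 1) / (4 * (k : ℚ_[p]) + 1)))
      = (∏ k ∈ Finset.Icc 1 ((p ^ (2 * n - 2) - 1) / 2),
          ((4 * (k : ℚ_[p]) - 1) / (4 * (k : ℚ_[p]) + 1)))
        * ((pGamma p (3 * q + (p : ℤ_[p]) ^ (2 * n - 1) * half) : ℚ_[p])
            / (pGamma p (q + (p : ℤ_[p]) ^ (2 * n - 1) * half) : ℚ_[p]))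
        * ((pGamma p (q + (p : ℤ_[p]) ^ (2 * n) * half) : ℚ_[p])
            / (pGamma p (3 * q + (p : ℤ_[p]) ^ (2 * n) * half) : ℚ_[p])) := by
  have hp2 : p ≠ 2 := by omega
  have hΓ : ∀ x, (pGamma p x : ℚ_[p]) ≠ 0 := fun x h =>
    by simpa [norm_pGamma hp2 x] using congrArg norm (PadicInt.coe_eq_zero.mp h)
  have hcur := guoProd_mul_guoProd_pred h4 (m := 2 * n) (by omega) hq hhalf
  have hprev := guoProd_mul_guoProd_pred h4 (m := 2 * n - 1) (by omega) hq hhalf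
  rw [show 2 * n - 1 - 1 = 2 * n - 2 by omega] at hprev
  change guoProd p _ = guoProd p _ * _ * _
  set a := (pGamma p (q + (p : ℤ_[p]) ^ (2 * n - 1) * half) : ℚ_[p])
  set b := (pGamma p (3 * q + (p : ℤ_[p]) ^ (2 * n - 1) * half) : ℚ_[p])
  set c := (pGamma p (q + (p : ℤ_[p]) ^ (2 * n) * half) : ℚ_[p])
  set d := (pGamma p (3 * q + (p : ℤ_[p]) ^ (2 * n) * half) : ℚ_[p])
  have hratio : guoProd p ((p ^ (2 * n) - 1) / 2) * (a * d) =
      guoProd p ((p ^ (2 * n - 2) - 1) / 2) * (b * c) :=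
    mul_left_cancel₀ (mul_ne_zero (guoProd_ne_zero ((p ^ (2 * n - 1) - 1) / 2)) (hΓ (3 * q)))
      (by linear_combination a * hcur - c * hprev)
  rw [mul_assoc, div_mul_div_comm, ← mul_div_assoc, eq_div_iff (mul_ne_zero (hΓ _) (hΓ _))]
  linear_combination hratio
end

section
/- Let p ≥ 3 be a prime, let a, m ∈ ℤ_p and let s ≥ 1 be an integer. Then Γ_p(a + m p^s) ≡ Γ_p(a) (mod p^s); in particular, for any a, b ∈ ℤ_p with a ≡ b (mod p²ℤ_p), Γ_p(a) ≡ Γ_p(b) (mod p²). -/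
open Finset Filter

lemma sq_eq_one_zmod (p s : ℕ) (x : ZMod (p ^ s)) (hx : x * x = 1) (hp : p.Prime)
    (hodd : Odd p) (hs : 1 ≤ s) : x = 1 ∨ x = -1 := by
  haveI : NeZero (p ^ s) := ⟨pow_ne_zero s hp.pos.ne'⟩
  set a : ℤ := (x.val : ℤ) with ha
  have hxa : ((a : ℤ) : ZMod (p ^ s)) = x := by simp [ha, ZMod.natCast_val, ZMod.intCast_cast]
  have hdvd : ((p : ℤ) ^ s) ∣ (a - 1) * (a + 1) := by
    have : (((a - 1) * (a + 1) : ℤ) : ZMod (p ^ s)) = 0 := by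
      push_cast
      rw [hxa]
      linear_combination hx
    rwa [ZMod.intCast_zmod_eq_zero_iff_dvd, Int.natCast_pow] at this
  have hpZ : Prime (p : ℤ) := Nat.prime_iff_prime_int.mp hp
  have hp2 : ¬ ((p : ℤ) ∣ 2) := by
    intro h
    have h2 : p ∣ 2 := by exact_mod_cast h
    have := (Nat.prime_dvd_prime_iff_eq hp Nat.prime_two).mp h2
    have := Nat.odd_iff.mp hodd
    omega
  have hps : (p : ℤ) ∣ (a - 1) * (a + 1) :=
    dvd_trans (dvd_pow_self _ (by omega)) hdvd
  rcases (hpZ.dvd_mul.mp hps) with h1 | h1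
  · have h2 : ¬ (p : ℤ) ∣ (a + 1) := by
      intro h2
      exact hp2 (by have := dvd_sub h2 h1; simpa using this)
    have hd : ((p : ℤ) ^ s) ∣ (a - 1) :=
      (((hpZ.coprime_iff_not_dvd).mpr h2).pow_left).dvd_of_dvd_mul_right hdvd
    left
    have h0 : (((a - 1 : ℤ)) : ZMod (p ^ s)) = 0 := by
      rw [ZMod.intCast_zmod_eq_zero_iff_dvd]; exact_mod_cast hd
    push_cast at h0
    rw [hxa] at h0
    exact sub_eq_zero.mp h0
  · have h2 : ¬ (p : ℤ) ∣ (a - 1) := by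
      intro h2
      exact hp2 (by have := dvd_sub h1 h2; simpa using this)
    have hd : ((p : ℤ) ^ s) ∣ (a + 1) :=
      (((hpZ.coprime_iff_not_dvd).mpr h2).pow_left).dvd_of_dvd_mul_left hdvd
    right
    have h0 : (((a + 1 : ℤ)) : ZMod (p ^ s)) = 0 := by
      rw [ZMod.intCast_zmod_eq_zero_iff_dvd]; exact_mod_cast hd
    push_cast at h0
    rw [hxa] at h0
    linear_combination h0

lemma wilson_prime_pow (p s : ℕ) [NeZero (p ^ s)] (hp : p.Prime) (hodd : Odd p) (hs : 1 ≤ s) :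
    ∏ u : (ZMod (p ^ s))ˣ, u = -1 := by
  haveI : NeZero (p ^ s) := ⟨pow_ne_zero s hp.pos.ne'⟩
  have h3 : 2 < p ^ s := by
    have hp3 : 3 ≤ p := by
      have := hp.two_le
      have := Nat.odd_iff.mp hodd
      omega
    calc 2 < 3 := by norm_num
    _ ≤ p := hp3
    _ ≤ p ^ s := Nat.le_self_pow (by omega) p
  haveI : Fact (2 < p ^ s) := ⟨h3⟩
  have hne : (-1 : (ZMod (p ^ s))ˣ) ≠ 1 := by
    intro h
    have h2 := congrArg (Units.val) h
    simp only [Units.val_neg, Units.val_one] at h2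
    exact ZMod.neg_one_ne_one (n := p ^ s) h2
  have hmem1 : (-1 : (ZMod (p ^ s))ˣ) ∈ (univ : Finset (ZMod (p ^ s))ˣ) := mem_univ _
  have hmem2 : (1 : (ZMod (p ^ s))ˣ) ∈ univ.erase (-1 : (ZMod (p ^ s))ˣ) :=
    Finset.mem_erase.mpr ⟨Ne.symm hne, mem_univ _⟩
  have hrest : ∏ u ∈ ((univ.erase (-1)).erase (1 : (ZMod (p ^ s))ˣ)), u = 1 := by
    apply Finset.prod_involution (fun a _ => a⁻¹)
    · intro a _; exact mul_inv_cancel a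
    · intro a ha hfa
      intro h
      have hmul : a * a = 1 := by
        nth_rewrite 2 [← h]
        exact mul_inv_cancel a
      have hsq : (a : ZMod (p ^ s)) * a = 1 := by
        have h2 := congrArg (Units.val) hmul
        simp only [Units.val_mul, Units.val_one] at h2
        exact h2
      rcases sq_eq_one_zmod p s a hsq hp hodd hs with h1 | h1
      · exact (Finset.mem_erase.mp ha).1 (Units.ext h1)
      · exact (Finset.mem_erase.mp (Finset.mem_erase.mp ha).2).1 (Units.ext h1)
    · intro a _; exact inv_inv a
    · intro a ha
      rcases Finset.mem_erase.mp ha with ⟨ha1, ha2⟩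
      rcases Finset.mem_erase.mp ha2 with ⟨ha3, _⟩
      refine Finset.mem_erase.mpr ⟨?_, Finset.mem_erase.mpr ⟨?_, mem_univ _⟩⟩
      · intro h; exact ha1 (by rw [← inv_inv a, h, inv_one])
      · intro h; exact ha3 (by rw [← inv_inv a, h]; simp)
  rw [← Finset.mul_prod_erase univ _ hmem1, ← Finset.mul_prod_erase _ _ hmem2, hrest]
  norm_num

lemma prod_Ico_units (p s n : ℕ) (hp : p.Prime) (hodd : Odd p) (hs : 1 ≤ s) :
    ∏ k ∈ (Finset.Ico n (n + p ^ s)).filter (fun k => ¬ p ∣ k), (k : ZMod (p ^ s)) = -1 := by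
  haveI : NeZero (p ^ s) := ⟨pow_ne_zero s hp.pos.ne'⟩
  have hcop : ∀ k ∈ (Finset.Ico n (n + p ^ s)).filter (fun k => ¬ p ∣ k), Nat.Coprime k (p ^ s) := by
    intro k hk
    have hk2 := (Finset.mem_filter.mp hk).2
    rw [Nat.coprime_pow_right_iff (by omega)]
    exact Nat.coprime_comm.mp (hp.coprime_iff_not_dvd.mpr hk2)
  have key : ∏ k ∈ (Finset.Ico n (n + p ^ s)).filter (fun k => ¬ p ∣ k), (k : ZMod (p ^ s))
      = ∏ u : (ZMod (p ^ s))ˣ, (u : ZMod (p ^ s)) := by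
    apply Finset.prod_bij (fun k hk => ZMod.unitOfCoprime k (hcop k hk))
    · intro a ha; exact mem_univ _
    · intro a ha b hb hab
      have h1 : ((a : ZMod (p ^ s))) = b := by
        have := congrArg (Units.val) hab
        simpa [ZMod.coe_unitOfCoprime] using this
      have h2 : a ≡ b [MOD p ^ s] := by
        rwa [ZMod.natCast_eq_natCast_iff] at h1
      have ha' := Finset.mem_Ico.mp (Finset.mem_filter.mp ha).1
      have hb' := Finset.mem_Ico.mp (Finset.mem_filter.mp hb).1
      apply h2.eq_of_abs_lt
      rw [abs_sub_lt_iff]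
      constructor <;> omega
    · intro u _
      set d := ((u : ZMod (p ^ s)) - (n : ZMod (p ^ s))).val with hd
      have hdlt : d < p ^ s := ZMod.val_lt _
      have hcast : ((n + d : ℕ) : ZMod (p ^ s)) = (u : ZMod (p ^ s)) := by
        push_cast
        rw [hd, ZMod.natCast_val, ZMod.cast_id]
        ring
      have hunit : IsUnit ((n + d : ℕ) : ZMod (p ^ s)) := by rw [hcast]; exact u.isUnit
      have hndvd : ¬ p ∣ (n + d) := by
        intro hdvd
        have hco := (ZMod.isUnit_iff_coprime (n + d) (p ^ s)).mp hunit
        rw [Nat.coprime_pow_right_iff (by omega)] at hco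
        have h1 : p ∣ Nat.gcd (n + d) p := Nat.dvd_gcd hdvd dvd_rfl
        rw [Nat.Coprime] at hco
        rw [hco] at h1
        have := Nat.le_of_dvd one_pos h1
        have := hp.two_le
        omega
      have hmem : (n + d) ∈ (Finset.Ico n (n + p ^ s)).filter (fun k => ¬ p ∣ k) := by
        refine Finset.mem_filter.mpr ⟨Finset.mem_Ico.mpr ⟨by omega, by omega⟩, hndvd⟩
      refine ⟨n + d, hmem, ?_⟩
      apply Units.ext
      rw [ZMod.coe_unitOfCoprime]
      exact hcast
    · intro a ha
      rw [ZMod.coe_unitOfCoprime]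
  rw [key]
  have hw := wilson_prime_pow p s hp hodd hs
  have h2 := map_prod (Units.coeHom (ZMod (p ^ s))) (fun u : (ZMod (p ^ s))ˣ => u) univ
  simp only [Units.coeHom_apply] at h2
  rw [← h2, hw]
  simp

lemma toZModPow_pGammaNat (p : ℕ) [Fact p.Prime] (s n : ℕ) :
    PadicInt.toZModPow s (pGammaNat p n)
      = (-1) ^ n * ∏ k ∈ (Finset.range n).filter (fun k => ¬ p ∣ k), (k : ZMod (p ^ s)) := by
  rw [pGammaNat, map_mul, map_pow, map_neg, map_one, map_prod]
  simp [map_natCast]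

lemma shift_dvd (p : ℕ) [Fact p.Prime] (hodd : Odd p) (s : ℕ) (hs : 1 ≤ s) (n : ℕ) :
    (p : ℤ_[p]) ^ s ∣ (pGammaNat p (n + p ^ s) - pGammaNat p n) := by
  have hp := (Fact.out : p.Prime)
  rw [← Ideal.mem_span_singleton, ← PadicInt.ker_toZModPow, RingHom.mem_ker, map_sub,
    sub_eq_zero, toZModPow_pGammaNat, toZModPow_pGammaNat]
  have hsplit : ∏ k ∈ (Finset.range (n + p ^ s)).filter (fun k => ¬ p ∣ k), (k : ZMod (p ^ s))
      = (∏ k ∈ (Finset.range n).filter (fun k => ¬ p ∣ k), (k : ZMod (p ^ s)))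
        * ∏ k ∈ (Finset.Ico n (n + p ^ s)).filter (fun k => ¬ p ∣ k), (k : ZMod (p ^ s)) := by
    rw [Finset.prod_filter, Finset.prod_filter, Finset.prod_filter, Finset.range_eq_Ico, Finset.range_eq_Ico,
      ← Finset.prod_Ico_consecutive _ (Nat.zero_le n) (Nat.le_add_right n _)]
  rw [hsplit, prod_Ico_units p s n hp hodd hs]
  have hoddN : Odd (p ^ s) := hodd.pow
  rw [pow_add, (hoddN.neg_one_pow : (-1 : ZMod (p ^ s)) ^ (p ^ s) = -1)]
  ring

lemma mul_shift_dvd (p : ℕ) [Fact p.Prime] (hodd : Odd p) (s : ℕ) (hs : 1 ≤ s) (n t : ℕ) :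
    (p : ℤ_[p]) ^ s ∣ (pGammaNat p (n + t * p ^ s) - pGammaNat p n) := by
  induction t with
  | zero => simp
  | succ t ih =>
    have h1 := shift_dvd p hodd s hs (n + t * p ^ s)
    have h2 : n + (t + 1) * p ^ s = n + t * p ^ s + p ^ s := by ring
    rw [h2]
    have := dvd_add h1 ih
    simpa using this

lemma lipschitz_nat (p : ℕ) [Fact p.Prime] (hodd : Odd p) (s : ℕ) (hs : 1 ≤ s) (m n : ℕ)
    (h : ((p : ℤ) ^ s) ∣ ((m : ℤ) - n)) :
    (p : ℤ_[p]) ^ s ∣ (pGammaNat p m - pGammaNat p n) := by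
  rcases le_total n m with hle | hle
  · have h' : (p ^ s : ℕ) ∣ (m - n) := by
      have hc : ((m - n : ℕ) : ℤ) = (m : ℤ) - n := by omega
      have h2 : ((p ^ s : ℕ) : ℤ) ∣ ((m - n : ℕ) : ℤ) := by rw [hc]; exact_mod_cast h
      exact_mod_cast h2
    obtain ⟨t, ht⟩ := h'
    have hm : m = n + t * p ^ s := by rw [Nat.mul_comm]; omega
    rw [hm]
    exact mul_shift_dvd p hodd s hs n t
  · have h2 : ((p : ℤ) ^ s) ∣ ((n : ℤ) - m) := by
      have := h.neg_right
      simpa [neg_sub] using this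
    have h' : (p ^ s : ℕ) ∣ (n - m) := by
      have hc : ((n - m : ℕ) : ℤ) = (n : ℤ) - m := by omega
      have h3 : ((p ^ s : ℕ) : ℤ) ∣ ((n - m : ℕ) : ℤ) := by rw [hc]; exact_mod_cast h2
      exact_mod_cast h3
    obtain ⟨t, ht⟩ := h'
    have hm : n = m + t * p ^ s := by rw [Nat.mul_comm]; omega
    have h4 := mul_shift_dvd p hodd s hs m t
    rw [← hm] at h4
    exact dvd_sub_comm.mp h4

lemma norm_lip (p : ℕ) [Fact p.Prime] (hodd : Odd p) (m n : ℕ) :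
    ‖pGammaNat p m - pGammaNat p n‖ ≤ ‖((m : ℤ_[p]) - n)‖ := by
  by_cases hx : ((m : ℤ_[p]) - n) = 0
  · have hmn : m = n := by
      have : ((m : ℤ_[p])) = n := sub_eq_zero.mp hx
      exact_mod_cast this
    simp [hmn]
  · set v := (((m : ℤ_[p]) - n).valuation : ℤ) with hv
    have hv0 : 0 ≤ v := Int.natCast_nonneg _
    have hnorm : ‖((m : ℤ_[p]) - n)‖ = (p : ℝ) ^ (-v) := PadicInt.norm_eq_zpow_neg_valuation hx
    set k := v.toNat with hk
    have hkv : (k : ℤ) = v := Int.toNat_of_nonneg hv0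
    rcases Nat.eq_zero_or_pos k with hk0 | hk1
    · have : ‖((m : ℤ_[p]) - n)‖ = 1 := by
        rw [hnorm, ← hkv, hk0]
        norm_num
      rw [this]
      exact PadicInt.norm_le_one _
    · have hdvd : (p : ℤ_[p]) ^ k ∣ ((m : ℤ_[p]) - n) := by
        rw [← Ideal.mem_span_singleton, ← PadicInt.norm_le_pow_iff_mem_span_pow, hnorm, ← hkv]
      have hint : ((p : ℤ) ^ k) ∣ ((m : ℤ) - n) := by
        rw [← PadicInt.pow_p_dvd_int_iff]
        push_cast
        exact hdvd
      have := lipschitz_nat p hodd k hk1 m n hint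
      rw [hnorm, ← hkv]
      rw [PadicInt.norm_le_pow_iff_mem_span_pow, Ideal.mem_span_singleton]
      exact this

lemma neBot_comap (p : ℕ) [Fact p.Prime] (x : ℤ_[p]) :
    NeBot (Filter.comap (Nat.cast : ℕ → ℤ_[p]) (nhds x)) := by
  rw [comap_neBot_iff]
  intro U hU
  have hx := PadicInt.denseRange_natCast (p := p) x
  obtain ⟨y, hyU, n, rfl⟩ := mem_closure_iff_nhds.mp hx U hU
  exact ⟨n, hyU⟩

lemma exists_tendsto_pGammaNat (p : ℕ) [Fact p.Prime] (hodd : Odd p) (x : ℤ_[p]) :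
    ∃ L, Tendsto (pGammaNat p) (Filter.comap (Nat.cast : ℕ → ℤ_[p]) (nhds x)) (nhds L) := by
  have hseq : ∀ k : ℕ, ‖((x.appr k : ℤ_[p])) - x‖ ≤ (p : ℝ) ^ (-(k : ℤ)) := by
    intro k
    rw [norm_sub_rev, PadicInt.norm_le_pow_iff_mem_span_pow]
    exact PadicInt.appr_spec k x
  have hp1 : (1 : ℝ) < p := by exact_mod_cast (Fact.out : p.Prime).one_lt
  have hcauchy : CauchySeq (fun k => pGammaNat p (x.appr k)) := by
    apply cauchySeq_of_le_geometric ((p : ℝ)⁻¹) 1 (by rw [inv_lt_one_iff₀]; right; exact hp1)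
    intro k
    rw [dist_eq_norm, one_mul]
    calc ‖pGammaNat p (x.appr k) - pGammaNat p (x.appr (k + 1))‖
        ≤ ‖((x.appr k : ℤ_[p])) - (x.appr (k + 1) : ℤ_[p])‖ := norm_lip p hodd _ _
      _ = ‖(((x.appr k : ℤ_[p])) - x) + (x - (x.appr (k + 1) : ℤ_[p]))‖ := by ring_nf
      _ ≤ max ‖((x.appr k : ℤ_[p])) - x‖ ‖x - (x.appr (k + 1) : ℤ_[p])‖ :=
          PadicInt.nonarchimedean _ _
      _ ≤ (p : ℝ) ^ (-(k : ℤ)) := by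
          apply max_le (hseq k)
          rw [norm_sub_rev]
          exact le_trans (hseq (k + 1)) (by
            apply zpow_le_zpow_right₀ (le_of_lt hp1)
            omega)
      _ = ((p : ℝ)⁻¹) ^ k := by
          rw [zpow_neg, inv_pow, zpow_natCast]
  obtain ⟨L, hL⟩ := cauchySeq_tendsto_of_complete hcauchy
  refine ⟨L, ?_⟩
  rw [Metric.tendsto_nhds]
  intro ε hε
  obtain ⟨k0, hk0⟩ := PadicInt.exists_pow_neg_lt p (show (0:ℝ) < ε/3 by linarith)
  have h1 : ∀ᶠ k in atTop, dist (pGammaNat p (x.appr k)) L < ε/3 :=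
    (Metric.tendsto_nhds.mp hL) _ (by linarith)
  obtain ⟨k, hk1, hk2⟩ := (h1.and (eventually_ge_atTop k0)).exists
  apply Filter.eventually_of_mem
    (Filter.preimage_mem_comap (Metric.ball_mem_nhds x (show (0:ℝ) < ε/3 by linarith)))
  intro n hn
  have hball : dist ((n : ℤ_[p])) x < ε/3 := hn
  have hk3 : (p : ℝ) ^ (-(k : ℤ)) < ε/3 := by
    refine lt_of_le_of_lt ?_ hk0
    apply zpow_le_zpow_right₀ (le_of_lt hp1)
    omega
  calc dist (pGammaNat p n) L
      ≤ dist (pGammaNat p n) (pGammaNat p (x.appr k)) + dist (pGammaNat p (x.appr k)) L :=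
        dist_triangle _ _ _
    _ < ε/3 + ε/3 + ε/3 := by
        have hstep : dist (pGammaNat p n) (pGammaNat p (x.appr k)) < ε/3 + ε/3 := by
          rw [dist_eq_norm]
          calc ‖pGammaNat p n - pGammaNat p (x.appr k)‖
              ≤ ‖((n : ℤ_[p])) - (x.appr k : ℤ_[p])‖ := norm_lip p hodd _ _
            _ ≤ ‖((n : ℤ_[p])) - x‖ + ‖x - (x.appr k : ℤ_[p])‖ := by
                have := norm_sub_le_norm_sub_add_norm_sub ((n : ℤ_[p])) x ((x.appr k : ℤ_[p]))
                exact this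
            _ < ε/3 + ε/3 := by
                apply add_lt_add_of_lt_of_le
                · rw [← dist_eq_norm]; exact hball
                · rw [norm_sub_rev]; exact le_trans (hseq k) (le_of_lt hk3) |>.trans (le_refl _)
        linarith
    _ = ε := by ring

lemma tendsto_pGamma (p : ℕ) [Fact p.Prime] (hodd : Odd p) (x : ℤ_[p]) :
    Tendsto (pGammaNat p) (Filter.comap (Nat.cast : ℕ → ℤ_[p]) (nhds x))
      (nhds (pGamma p x)) := by
  obtain ⟨L, hL⟩ := exists_tendsto_pGammaNat p hodd x
  haveI := neBot_comap p x
  rw [show pGamma p x = L from hL.limUnder_eq]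
  exact hL

theorem pGamma_lipschitz (p : ℕ) [Fact p.Prime] (hp : Odd p) (s : ℕ) (hs : 1 ≤ s)
    (a b : ℤ_[p]) (hab : (p : ℤ_[p]) ^ s ∣ (a - b)) :
    (p : ℤ_[p]) ^ s ∣ (pGamma p a - pGamma p b) := by
  have hp1 : (1 : ℝ) < p := by exact_mod_cast (Fact.out : p.Prime).one_lt
  -- approximating sequences
  have happr : ∀ (x : ℤ_[p]) (k : ℕ), (p : ℤ_[p]) ^ (s + k) ∣ (x - (x.appr (s + k) : ℤ_[p])) := by
    intro x k
    rw [← Ideal.mem_span_singleton]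
    exact PadicInt.appr_spec (s + k) x
  have htend : ∀ x : ℤ_[p],
      Tendsto (fun k => pGammaNat p (x.appr (s + k))) atTop (nhds (pGamma p x)) := by
    intro x
    apply (tendsto_pGamma p hp x).comp
    rw [tendsto_comap_iff]
    have hb : ∀ k : ℕ, dist ((x.appr (s + k) : ℤ_[p])) x ≤ ((p : ℝ)⁻¹) ^ (s + k) := by
      intro k
      rw [dist_eq_norm, norm_sub_rev, inv_pow, ← zpow_natCast, ← zpow_neg,
        PadicInt.norm_le_pow_iff_mem_span_pow]
      exact PadicInt.appr_spec (s + k) x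
    rw [tendsto_iff_dist_tendsto_zero]
    apply squeeze_zero (fun k => dist_nonneg) hb
    have : Tendsto (fun k : ℕ => ((p : ℝ)⁻¹) ^ k) atTop (nhds 0) := by
      apply tendsto_pow_atTop_nhds_zero_of_lt_one (by positivity)
      rw [inv_lt_one_iff₀]; right; exact hp1
    have h2 : Tendsto (fun k : ℕ => ((p : ℝ)⁻¹) ^ s * ((p : ℝ)⁻¹) ^ k) atTop (nhds 0) := by
      simpa using this.const_mul (((p : ℝ)⁻¹) ^ s)
    simpa [pow_add] using h2
  -- termwise bound
  have hd : ∀ k : ℕ, ‖pGammaNat p (a.appr (s + k)) - pGammaNat p (b.appr (s + k))‖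
      ≤ (p : ℝ) ^ (-(s : ℤ)) := by
    intro k
    have h1 : (p : ℤ_[p]) ^ s ∣ ((a.appr (s + k) : ℤ_[p]) - (b.appr (s + k) : ℤ_[p])) := by
      have e : ((a.appr (s + k) : ℤ_[p]) - (b.appr (s + k) : ℤ_[p]))
          = -(a - (a.appr (s + k) : ℤ_[p])) + (a - b) + (b - (b.appr (s + k) : ℤ_[p])) := by ring
      rw [e]
      have hsk : (p : ℤ_[p]) ^ s ∣ (p : ℤ_[p]) ^ (s + k) := pow_dvd_pow _ (by omega)
      exact dvd_add (dvd_add ((hsk.trans (happr a k)).neg_right) hab) (hsk.trans (happr b k))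
    have hint : ((p : ℤ) ^ s) ∣ ((a.appr (s + k) : ℤ) - (b.appr (s + k) : ℤ)) := by
      rw [← PadicInt.pow_p_dvd_int_iff]
      push_cast
      exact h1
    have := lipschitz_nat p hp s hs _ _ hint
    rw [PadicInt.norm_le_pow_iff_mem_span_pow, Ideal.mem_span_singleton]
    exact this
  have hlim : Tendsto
      (fun k => ‖pGammaNat p (a.appr (s + k)) - pGammaNat p (b.appr (s + k))‖) atTop
      (nhds ‖pGamma p a - pGamma p b‖) := ((htend a).sub (htend b)).norm
  have hnorm : ‖pGamma p a - pGamma p b‖ ≤ (p : ℝ) ^ (-(s : ℤ)) :=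
    le_of_tendsto hlim (Filter.Eventually.of_forall hd)
  rw [← Ideal.mem_span_singleton, ← PadicInt.norm_le_pow_iff_mem_span_pow]
  exact hnorm
end

section
/- Let p be a prime with p ≡ 3 (mod 4). Then v_p( (3/4)_{(p²-1)/2} / (5/4)_{(p²-1)/2} ) = 0, where (a)_n denotes the rising factorial of a over n steps (a rational number). -/
open Finset Filter

-- not dvd helper: ¬ (4m+3) ∣ t when t ≤ 8m+5 and t % 4 ≠ 3
lemma aux_not_dvd (m t : ℕ) (hpos : 0 < t) (hle : t ≤ 8*m+5) (hne : t ≠ 4*m+3) :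
    ¬ (4*m+3) ∣ t := by
  rintro ⟨c, rfl⟩
  match c with
  | 0 => omega
  | 1 => omega
  | (c+2) =>
    have : (4*m+3) * (c+2) = (4*m+3)*c + (8*m+6) := by ring
    omega

lemma count_num (m : ℕ) (hp : (4*m+3).Prime) :
    ∑ k ∈ Finset.Icc 1 (8*(m*m)+12*m+4), padicValNat (4*m+3) (4*k-1) = 2*m+2 := by
  have hfilter : (Finset.Icc 1 (8*(m*m)+12*m+4)).filter (fun k => (4*m+3) ∣ (4*k-1))
      = (Finset.range (2*m+2)).image (fun s => (4*m+3)*s + m + 1) := by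
    ext k
    simp only [mem_filter, mem_Icc, mem_image, mem_range]
    constructor
    · rintro ⟨⟨hk1, hkN⟩, t, ht⟩
      have hmod : ((4*m+3) * t) % 4 = 3 := by omega
      have hmm : ((4*m+3) % 4 * (t % 4)) % 4 = 3 := by rw [← Nat.mul_mod]; exact hmod
      rw [show (4*m+3) % 4 = 3 by omega] at hmm
      have ht4 : t % 4 = 1 := by omega
      obtain ⟨s, rfl⟩ : ∃ s, t = 4*s+1 := ⟨t/4, by omega⟩
      have hexp : (4*m+3) * (4*s+1) = 4*((4*m+3)*s) + (4*m+3) := by ring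
      refine ⟨s, ?_, by omega⟩
      -- bound on s
      by_contra hs
      push_neg at hs
      have h1 : (4*m+3)*(8*m+9) ≤ (4*m+3)*(4*s+1) := Nat.mul_le_mul_left _ (by omega)
      have h2 : (4*m+3)*(8*m+9) = 32*(m*m) + 60*m + 27 := by ring
      omega
    · rintro ⟨s, hs, rfl⟩
      have h1 : (4*m+3)*s ≤ (4*m+3)*(2*m+1) := Nat.mul_le_mul_left _ (by omega)
      have h2 : (4*m+3)*(2*m+1) = 8*(m*m)+10*m+3 := by ring
      refine ⟨⟨by omega, by omega⟩, 4*s+1, ?_⟩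
      have hexp : (4*m+3) * (4*s+1) = 4*((4*m+3)*s) + (4*m+3) := by ring
      omega
  have hzero : ∀ k ∈ Finset.Icc 1 (8*(m*m)+12*m+4), ¬ (4*m+3) ∣ (4*k-1) →
      padicValNat (4*m+3) (4*k-1) = 0 := fun k _ h => padicValNat.eq_zero_of_not_dvd h
  have hsum : ∑ k ∈ Finset.Icc 1 (8*(m*m)+12*m+4), padicValNat (4*m+3) (4*k-1)
      = ∑ k ∈ (Finset.Icc 1 (8*(m*m)+12*m+4)).filter (fun k => (4*m+3) ∣ (4*k-1)),
        padicValNat (4*m+3) (4*k-1) := by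
    refine (Finset.sum_filter_of_ne ?_).symm
    intro k hk h
    by_contra hd
    exact h (hzero k hk hd)
  rw [hsum, hfilter]
  rw [Finset.sum_image (by
    intro a _ b _ hab
    have := Nat.eq_of_mul_eq_mul_left (show 0 < 4*m+3 by omega) (show (4*m+3)*a = (4*m+3)*b by simp only at hab; omega)
    exact this)]
  have hterm : ∀ s ∈ Finset.range (2*m+2),
      padicValNat (4*m+3) (4*((4*m+3)*s + m + 1)-1) = 1 := by
    intro s hs
    simp only [mem_range] at hs
    have hexp : 4*((4*m+3)*s + m + 1)-1 = (4*m+3) * (4*s+1) := by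
      have : (4*m+3) * (4*s+1) = 4*((4*m+3)*s) + (4*m+3) := by ring
      omega
    rw [hexp]
    haveI : Fact (4*m+3).Prime := ⟨hp⟩
    rw [padicValNat.mul (by omega) (by omega), padicValNat.self (by omega),
      padicValNat.eq_zero_of_not_dvd (aux_not_dvd m (4*s+1) (by omega) (by omega) (by omega))]
  rw [Finset.sum_congr rfl hterm]
  simp

lemma count_den (m : ℕ) (hp : (4*m+3).Prime) :
    ∑ k ∈ Finset.Icc 1 (8*(m*m)+12*m+4), padicValNat (4*m+3) (4*k+1) = 2*m+2 := by
  haveI : Fact (4*m+3).Prime := ⟨hp⟩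
  have hfilter : (Finset.Icc 1 (8*(m*m)+12*m+4)).filter (fun k => (4*m+3) ∣ (4*k+1))
      = (Finset.range (2*m+1)).image (fun s => (4*m+3)*s + 3*m + 2) := by
    ext k
    simp only [mem_filter, mem_Icc, mem_image, mem_range]
    constructor
    · rintro ⟨⟨hk1, hkN⟩, t, ht⟩
      have hmod : ((4*m+3) * t) % 4 = 1 := by omega
      have hmm : ((4*m+3) % 4 * (t % 4)) % 4 = 1 := by rw [← Nat.mul_mod]; exact hmod
      rw [show (4*m+3) % 4 = 3 by omega] at hmm
      have ht4 : t % 4 = 3 := by omega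
      obtain ⟨s, rfl⟩ : ∃ s, t = 4*s+3 := ⟨t/4, by omega⟩
      have hexp : (4*m+3) * (4*s+3) = 4*((4*m+3)*s) + (12*m+9) := by ring
      refine ⟨s, ?_, by omega⟩
      by_contra hs
      push_neg at hs
      have h1 : (4*m+3)*(8*m+7) ≤ (4*m+3)*(4*s+3) := Nat.mul_le_mul_left _ (by omega)
      have h2 : (4*m+3)*(8*m+7) = 32*(m*m) + 52*m + 21 := by ring
      omega
    · rintro ⟨s, hs, rfl⟩
      have h1 : (4*m+3)*s ≤ (4*m+3)*(2*m) := Nat.mul_le_mul_left _ (by omega)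
      have h2 : (4*m+3)*(2*m) = 8*(m*m)+6*m := by ring
      refine ⟨⟨by omega, by omega⟩, 4*s+3, ?_⟩
      have hexp : (4*m+3) * (4*s+3) = 4*((4*m+3)*s) + (12*m+9) := by ring
      omega
  have hzero : ∀ k ∈ Finset.Icc 1 (8*(m*m)+12*m+4), ¬ (4*m+3) ∣ (4*k+1) →
      padicValNat (4*m+3) (4*k+1) = 0 := fun k _ h => padicValNat.eq_zero_of_not_dvd h
  have hsum : ∑ k ∈ Finset.Icc 1 (8*(m*m)+12*m+4), padicValNat (4*m+3) (4*k+1)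
      = ∑ k ∈ (Finset.Icc 1 (8*(m*m)+12*m+4)).filter (fun k => (4*m+3) ∣ (4*k+1)),
        padicValNat (4*m+3) (4*k+1) := by
    refine (Finset.sum_filter_of_ne ?_).symm
    intro k hk h
    by_contra hd
    exact h (hzero k hk hd)
  rw [hsum, hfilter]
  rw [Finset.sum_image (by
    intro a _ b _ hab
    exact Nat.eq_of_mul_eq_mul_left (show 0 < 4*m+3 by omega)
      (show (4*m+3)*a = (4*m+3)*b by simp only at hab; omega))]
  have hterm : ∀ s ∈ Finset.range (2*m+1),
      padicValNat (4*m+3) (4*((4*m+3)*s + 3*m + 2)+1)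
        = 1 + padicValNat (4*m+3) (4*s+3) := by
    intro s hs
    have hexp : 4*((4*m+3)*s + 3*m + 2)+1 = (4*m+3) * (4*s+3) := by ring
    rw [hexp, padicValNat.mul (by omega) (by omega), padicValNat.self (by omega)]
  rw [Finset.sum_congr rfl hterm, Finset.sum_add_distrib]
  have hlast : ∀ s ∈ Finset.range (2*m+1),
      padicValNat (4*m+3) (4*s+3) = if s = m then 1 else 0 := by
    intro s hs
    simp only [mem_range] at hs
    by_cases h : s = m
    · subst h; simp [padicValNat.self (show 1 < 4*s+3 by omega)]
    · rw [if_neg h]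
      exact padicValNat.eq_zero_of_not_dvd
        (aux_not_dvd m (4*s+3) (by omega) (by omega) (by omega))
  rw [Finset.sum_congr rfl hlast, Finset.sum_ite_eq' (Finset.range (2*m+1)) m (fun _ => 1)]
  simp [show m ∈ Finset.range (2*m+1) from mem_range.mpr (by omega)]

lemma padicValNat_prod_icc (p N : ℕ) (hp : p.Prime) (f : ℕ → ℕ)
    (hf : ∀ k ∈ Finset.Icc 1 N, f k ≠ 0) :
    padicValNat p (∏ k ∈ Finset.Icc 1 N, f k) = ∑ k ∈ Finset.Icc 1 N, padicValNat p (f k) := by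
  rw [← Nat.factorization_def _ hp, Nat.factorization_prod hf, Finset.sum_apply']
  exact Finset.sum_congr rfl fun k _ => Nat.factorization_def _ hp

theorem prod_is_unit (p : ℕ) (hp : p.Prime) (h4 : p % 4 = 3) :
    padicValRat p (∏ k ∈ Finset.Icc 1 (((p ^ 2 - 1) / 2 : ℕ)),
      ((4 * (k : ℚ) - 1) / (4 * (k : ℚ) + 1))) = 0 := by
  obtain ⟨m, rfl⟩ : ∃ m, p = 4*m+3 := ⟨p/4, by omega⟩
  haveI : Fact (4*m+3).Prime := ⟨hp⟩
  have hN : ((4*m+3)^2 - 1)/2 = 8*(m*m)+12*m+4 := by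
    have : (4*m+3)^2 = 16*(m*m)+24*m+9 := by ring
    omega
  rw [hN]
  have hA0 : (∏ k ∈ Finset.Icc 1 (8*(m*m)+12*m+4), (4*k-1)) ≠ 0 := by
    refine Finset.prod_ne_zero_iff.mpr ?_
    intro k hk
    simp only [Finset.mem_Icc] at hk
    omega
  have hB0 : (∏ k ∈ Finset.Icc 1 (8*(m*m)+12*m+4), (4*k+1)) ≠ 0 := by
    refine Finset.prod_ne_zero_iff.mpr ?_
    intro k hk
    omega
  have hprod : ∏ k ∈ Finset.Icc 1 (8*(m*m)+12*m+4), ((4*(k:ℚ)-1)/(4*(k:ℚ)+1))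
      = ((∏ k ∈ Finset.Icc 1 (8*(m*m)+12*m+4), (4*k-1) : ℕ) : ℚ)
        / ((∏ k ∈ Finset.Icc 1 (8*(m*m)+12*m+4), (4*k+1) : ℕ) : ℚ) := by
    rw [Nat.cast_prod, Nat.cast_prod, ← Finset.prod_div_distrib]
    refine Finset.prod_congr rfl ?_
    intro k hk
    simp only [Finset.mem_Icc] at hk
    rw [Nat.cast_sub (by omega : 1 ≤ 4*k)]
    push_cast
    ring_nf
  rw [hprod, padicValRat.div (p := 4*m+3) (Nat.cast_ne_zero.mpr hA0) (Nat.cast_ne_zero.mpr hB0),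
    padicValRat.of_nat, padicValRat.of_nat,
    padicValNat_prod_icc _ _ hp _ (fun k hk => by simp only [Finset.mem_Icc] at hk; omega),
    padicValNat_prod_icc _ _ hp _ (fun k hk => by omega),
    count_num m hp, count_den m hp, sub_self]
end
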